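/- arXiv:1708.02939 — 4 statements merged into one kernel-verified Lean document; each statement's English description precedes it below -/
import Mathlib

section
/- Let g : ℝ → [0,∞) be a convex, differentiable, nonnegative function whose derivative g′ satisfies |g′(s) − g′(s̃)| ≤ L|s − s̃|^α for all s, s̃ ∈ ℝ, where α ∈ (0,1] and L > 0. Then for every s ∈ ℝ, |g′(s)|² ≤ A·g(s) + B, where A = 2 α^{(1−α)/(1+α)} L^{2/(1+α)} (1+α) and B = α^{−2α/(1+α)} L^{2/(1+α)} (1 − α²). -/
/-!
The Hölder bound on `g'` gives the first-order Taylor estimate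
`|g (s + t) - g s - g' s * t| ≤ L |t|^(1+α)`, so nonnegativity of `g` at `s ± r` yields
`|g' s| r ≤ g s + L r^(1+α)` for every `r ≥ 0`. Evaluating at the maximiser of
`r ↦ |g' s| r - L r^(1+α)` bounds `|g' s|²` by a multiple of `g s ^ (2α/(1+α))`, and the weighted
AM-GM inequality `G^θ ≤ θ G + (1 - θ)` with `θ = 2α/(1+α)` makes this affine in `g s`.
-/

open Real Set

theorem abs_sub_sub_mul_le_of_holder_deriv {f f' : ℝ → ℝ} {L α : ℝ} (hL : 0 ≤ L) (hα : 0 ≤ α)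
    (hf : ∀ x, HasDerivAt f (f' x) x) (hholder : ∀ x y, |f' x - f' y| ≤ L * |x - y| ^ α)
    (x t : ℝ) : |f (x + t) - f x - f' x * t| ≤ L * |t| ^ (1 + α) := by
  have hbound : ∀ y ∈ uIcc x (x + t), ‖f' y - f' x‖ ≤ L * |t| ^ α := fun y hy ↦
    calc |f' y - f' x| ≤ L * |y - x| ^ α := hholder y x
      _ ≤ L * |t| ^ α := by
        have : |y - x| ≤ |t| := by simpa using abs_sub_left_of_mem_uIcc hy
        gcongr
  have hderiv : ∀ y ∈ uIcc x (x + t),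
      HasDerivWithinAt (fun z ↦ f z - f' x * z) (f' y - f' x) (uIcc x (x + t)) y := fun y _ ↦
    ((hf y).sub (by simpa using (hasDerivAt_id y).const_mul (f' x))).hasDerivWithinAt
  have hmvt := (convex_uIcc x (x + t)).norm_image_sub_le_of_norm_hasDerivWithin_le hderiv hbound
    left_mem_uIcc right_mem_uIcc
  rw [rpow_one_add' (abs_nonneg t) (by positivity)]
  convert hmvt using 1
  · simp only [Real.norm_eq_abs]
    ring_nf
  · simp only [Real.norm_eq_abs, add_sub_cancel_left]
    ring

theorem abs_deriv_mul_le_of_nonneg_of_holder {g g' : ℝ → ℝ} {L α : ℝ} (hL : 0 ≤ L) (hα : 0 ≤ α)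
    (hg : ∀ x, 0 ≤ g x) (hderiv : ∀ x, HasDerivAt g (g' x) x)
    (hholder : ∀ x y, |g' x - g' y| ≤ L * |x - y| ^ α) (x r : ℝ) :
    |g' x * r| ≤ g x + L * |r| ^ (1 + α) := by
  have hdescent := abs_sub_sub_mul_le_of_holder_deriv hL hα hderiv hholder x
  have hplus := (abs_le.1 (hdescent r)).2
  have hminus := (abs_le.1 (hdescent (-r))).2
  rw [abs_neg] at hminus
  have hg_plus := hg (x + r)
  have hg_minus := hg (x + -r)
  rw [abs_le]
  constructor <;> linarith

theorem sq_le_of_forall_mul_le_add_rpow {m G L α : ℝ} (hm : 0 ≤ m) (hL : 0 < L) (hα : 0 < α)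
    (h : ∀ r, 0 ≤ r → m * r ≤ G + L * r ^ (1 + α)) :
    m ^ 2 ≤ (L * (1 + α)) ^ (2 / (1 + α)) * ((1 + α) / α * G) ^ (2 * α / (1 + α)) := by
  set c := L * (1 + α)
  have hc : 0 < c := by positivity
  -- `m = c r^α` is the first-order condition for the maximiser of `r ↦ m r - L r^(1+α)`.
  obtain ⟨r, hr, rfl⟩ : ∃ r, 0 ≤ r ∧ m = c * r ^ α :=
    ⟨(m / c) ^ α⁻¹, by positivity, by rw [rpow_inv_rpow (by positivity) hα.ne']; field_simp⟩
  have hmr : c * r ^ α * r = c * r ^ (1 + α) := by rw [rpow_one_add' hr (by positivity)]; ring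
  have hopt : c * r ^ α * r ≤ (1 + α) / α * G := by
    have hr_opt := h r hr
    rw [hmr] at hr_opt ⊢
    rw [div_mul_eq_mul_div, le_div_iff₀ hα]
    linear_combination (1 + α) * hr_opt
  calc (c * r ^ α) ^ 2 = c ^ ((2 : ℕ) : ℝ) * r ^ (α * (2 : ℕ)) := by
        rw [rpow_natCast, rpow_mul_natCast hr]; ring
    _ = c ^ (2 / (1 + α) + 2 * α / (1 + α)) * r ^ ((1 + α) * (2 * α / (1 + α))) := by
        congr 2 <;> field_simp <;> ring
    _ = c ^ (2 / (1 + α)) * (c * r ^ α * r) ^ (2 * α / (1 + α)) := by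
        rw [hmr, rpow_add hc, mul_rpow hc.le (by positivity), rpow_mul hr]; ring
    _ ≤ c ^ (2 / (1 + α)) * ((1 + α) / α * G) ^ (2 * α / (1 + α)) := by gcongr

theorem holder_sq_bound_le_affine {G L α : ℝ} (hL : 0 < L) (hα : α ∈ Ioc (0 : ℝ) 1) (hG : 0 ≤ G) :
    (L * (1 + α)) ^ (2 / (1 + α)) * ((1 + α) / α * G) ^ (2 * α / (1 + α)) ≤
      2 * α ^ ((1 - α) / (1 + α)) * L ^ (2 / (1 + α)) * (1 + α) * G
        + α ^ (-(2 * α) / (1 + α)) * L ^ (2 / (1 + α)) * (1 - α ^ 2) := by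
  obtain ⟨hα0, hα1⟩ := hα
  set θ := 2 * α / (1 + α) with hθ
  have hθ1 : θ ≤ 1 := by rw [hθ, div_le_one (by positivity)]; linarith
  have hamgm : G ^ θ ≤ θ * G + (1 - θ) := by
    simpa using geom_mean_le_arith_mean2_weighted (p₂ := 1) (by positivity) (by linarith) hG
      zero_le_one (add_sub_cancel θ 1)
  have hsq : (1 + α) ^ (2 / (1 + α)) * (1 + α) ^ θ = (1 + α) ^ 2 := by
    rw [← rpow_add (by positivity), ← rpow_natCast, hθ]
    congr 1
    field_simp
    norm_num
  have hαexp : α ^ ((1 - α) / (1 + α)) = α * α ^ (-θ) := by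
    rw [mul_comm, ← rpow_add_one hα0.ne']
    congr 1
    rw [hθ]
    field_simp
    ring
  calc (L * (1 + α)) ^ (2 / (1 + α)) * ((1 + α) / α * G) ^ θ
      = L ^ (2 / (1 + α)) * α ^ (-θ) * ((1 + α) ^ (2 / (1 + α)) * (1 + α) ^ θ) * G ^ θ := by
        rw [mul_rpow hL.le (by positivity), mul_rpow (by positivity) hG, div_rpow (by positivity)
          hα0.le, rpow_neg hα0.le]
        ring
    _ ≤ L ^ (2 / (1 + α)) * α ^ (-θ) * (1 + α) ^ 2 * (θ * G + (1 - θ)) := by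
        rw [hsq]
        gcongr
    _ = _ := by
        rw [hαexp, neg_div, hθ]
        field_simp
        ring

theorem self_bounding_of_holder_derivative_general
    (g g' : ℝ → ℝ) (L α : ℝ) (hL : 0 < L) (hα : α ∈ Set.Ioc (0 : ℝ) 1)
    (hnonneg : ∀ s, 0 ≤ g s)
    (hderiv : ∀ s, HasDerivAt g (g' s) s)
    (hholder : ∀ s t : ℝ, |g' s - g' t| ≤ L * |s - t| ^ α) :
    ∀ s : ℝ,
      |g' s| ^ 2 ≤ 2 * α ^ ((1 - α) / (1 + α)) * L ^ (2 / (1 + α)) * (1 + α) * g s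
        + α ^ (-(2 * α) / (1 + α)) * L ^ (2 / (1 + α)) * (1 - α ^ 2) := by
  intro s
  have hslope : ∀ r, 0 ≤ r → |g' s| * r ≤ g s + L * r ^ (1 + α) := fun r hr ↦ by
    simpa [abs_mul, abs_of_nonneg hr] using
      abs_deriv_mul_le_of_nonneg_of_holder hL.le hα.1.le hnonneg hderiv hholder s r
  exact (sq_le_of_forall_mul_le_add_rpow (abs_nonneg _) hL hα.1 hslope).trans
    (holder_sq_bound_le_affine hL hα (hnonneg s))

/-- Self-bounding property: if `g : ℝ → [0,∞)` is convex, differentiable and nonnegative with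
`(α, L)`-Hölder continuous derivative, then `|g′(s)|² ≤ A g(s) + B` with
`A = 2 α^{(1-α)/(1+α)} L^{2/(1+α)} (1+α)` and `B = α^{-2α/(1+α)} L^{2/(1+α)} (1-α²)`. -/
theorem self_bounding_of_holder_derivative
    (g g' : ℝ → ℝ) (L α : ℝ) (hL : 0 < L) (hα : α ∈ Set.Ioc (0 : ℝ) 1)
    (hnonneg : ∀ s, 0 ≤ g s) (hconv : ConvexOn ℝ Set.univ g)
    (hderiv : ∀ s, HasDerivAt g (g' s) s)
    (hholder : ∀ s t : ℝ, |g' s - g' t| ≤ L * |s - t| ^ α) :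
    ∀ s : ℝ,
      |g' s| ^ 2 ≤ 2 * α ^ ((1 - α) / (1 + α)) * L ^ (2 / (1 + α)) * (1 + α) * g s
        + α ^ (-(2 * α) / (1 + α)) * L ^ (2 / (1 + α)) * (1 - α ^ 2) :=
  self_bounding_of_holder_derivative_general g g' L α hL hα hnonneg hderiv hholder
end

section
/- Under Assumption 1, suppose f_H ∈ H is a minimizer of E over H (so ∇E(f_H) = 0). Then for every f ∈ H and every β ∈ (0,1]: ∫_Z |φ′(y, f(x))|^{1+β} dρ ≤ 2^β L^{1/α} (1+β) [E(f) − E(f_H)] + 2^β (1 − αβ)/(1+α) + 2^β ∫_Z |φ′(y, f_H(x))|^{1+β} dρ. -/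
/-!
Hölder continuity of `φ'` gives the descent inequality
`φ u ≤ φ s + φ' s * (u - s) + L / (1 + α) * |u - s| ^ (1 + α)`. Together with the tangent-line
inequality of convexity, and maximised over the step `u - s` (a Fenchel conjugate of
`|v| ^ (1 + α)`), it bounds `|φ' s - φ' t| ^ ((1 + α) / α)` by the Bregman divergence of `φ` at
`(s, t)`. Young's inequality lowers the exponent to `1 + β`, and
`(x + y) ^ (1 + β) ≤ 2 ^ β * (x ^ (1 + β) + y ^ (1 + β))` splits off `|φ' t| ^ (1 + β)`.
Taking `s = ⟪g, K x⟫` and `t = ⟪f_H, K x⟫`, the Bregman divergence integrates to `E g - E f_H`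
because the gradient `∫ φ'(y, f_H x) • K x dρ` vanishes. Since `φ ≥ 0`, the same conjugate
bound with `φ` itself in place of the divergence makes `|φ'(y, f_H x)| ^ (1 + β)` integrable.
-/

open MeasureTheory ProbabilityTheory Filter Real
open scoped RealInnerProductSpace

section HolderDerivative

variable {f f' : ℝ → ℝ} {L a β : ℝ}

theorem continuous_of_abs_sub_le_mul_rpow (ha : 0 < a)
    (hhold : ∀ s t, |f' s - f' t| ≤ L * |s - t| ^ a) : Continuous f' := by
  refine continuous_iff_continuousAt.2 fun t => tendsto_iff_norm_sub_tendsto_zero.2 ?_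
  refine squeeze_zero (fun _ => norm_nonneg _) (fun s => hhold s t) ?_
  have : Continuous fun s => L * |s - t| ^ a := by fun_prop (disch := exact ha.le)
  simpa [zero_rpow ha.ne'] using this.tendsto t

theorem abs_sub_sub_deriv_mul_le (ha : 0 < a) (hderiv : ∀ s, HasDerivAt f (f' s) s)
    (hhold : ∀ s t, |f' s - f' t| ≤ L * |s - t| ^ a) (s u : ℝ) :
    |f u - f s - f' s * (u - s)| ≤ L / (1 + a) * |u - s| ^ (1 + a) := by
  have hcont := continuous_of_abs_sub_le_mul_rpow ha hhold
  have hftc : (u - s) * ∫ θ in (0 : ℝ)..1, f' (s + (u - s) * θ) = f u - f s := by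
    rw [← smul_eq_mul, intervalIntegral.smul_integral_comp_add_mul, mul_zero, add_zero, mul_one,
      add_sub_cancel, intervalIntegral.integral_eq_sub_of_hasDerivAt (fun τ _ => hderiv τ)
        (hcont.intervalIntegrable s u)]
  have hrem : f u - f s - f' s * (u - s)
      = (u - s) * ∫ θ in (0 : ℝ)..1, (f' (s + (u - s) * θ) - f' s) := by
    have : Continuous fun θ => f' (s + (u - s) * θ) := by fun_prop
    rw [intervalIntegral.integral_sub (this.intervalIntegrable 0 1) intervalIntegrable_const,
      ← hftc, intervalIntegral.integral_const]
    simp only [sub_zero, smul_eq_mul, one_mul]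
    ring
  have hbound : |∫ θ in (0 : ℝ)..1, (f' (s + (u - s) * θ) - f' s)|
      ≤ ∫ θ in (0 : ℝ)..1, L * |u - s| ^ a * θ ^ a := by
    have hB : Continuous fun θ : ℝ => L * |u - s| ^ a * θ ^ a := by
      fun_prop (disch := exact ha.le)
    rw [← Real.norm_eq_abs]
    refine intervalIntegral.norm_integral_le_of_norm_le zero_le_one
      (Eventually.of_forall fun θ hθ => ?_) (hB.intervalIntegrable 0 1)
    calc ‖f' (s + (u - s) * θ) - f' s‖ ≤ L * |s + (u - s) * θ - s| ^ a := hhold _ _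
      _ = L * |u - s| ^ a * θ ^ a := by
        rw [add_sub_cancel_left, abs_mul, mul_rpow (abs_nonneg _) (abs_nonneg _),
          abs_of_nonneg hθ.1.le]
        ring
  rw [intervalIntegral.integral_const_mul, integral_rpow (Or.inl (by linarith))] at hbound
  rw [hrem, abs_mul]
  calc |u - s| * |∫ θ in (0 : ℝ)..1, (f' (s + (u - s) * θ) - f' s)|
      ≤ |u - s| * (L * |u - s| ^ a * ((1 ^ (a + 1) - 0 ^ (a + 1)) / (a + 1))) := by gcongr
    _ = L / (1 + a) * |u - s| ^ (1 + a) := by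
      rw [rpow_add' (abs_nonneg _) (by linarith), rpow_one, one_rpow, zero_rpow (by linarith)]
      ring

theorem abs_rpow_conj_le_of_forall_mul_sub_le {b D : ℝ} (hL : 0 < L) (ha : 0 < a)
    (h : ∀ v, b * v - L / (1 + a) * |v| ^ (1 + a) ≤ D) :
    |b| ^ ((1 + a) / a) ≤ (1 + a) / a * L ^ (1 / a) * D := by
  -- `v = sign b * r` maximises `b * v - L / (1 + a) * |v| ^ (1 + a)`
  set r := (|b| / L) ^ (1 / a) with hr_def
  have hr : 0 ≤ r := by positivity
  obtain ⟨v, hbv, hv⟩ : ∃ v, b * v = |b| * r ∧ |v| = r := by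
    rcases le_total 0 b with hb | hb
    · exact ⟨r, by rw [abs_of_nonneg hb], abs_of_nonneg hr⟩
    · exact ⟨-r, by rw [abs_of_nonpos hb]; ring, by rw [abs_neg, abs_of_nonneg hr]⟩
  have hvr : |v| ^ (1 + a) = r * (|b| / L) := by
    rw [hv, rpow_add' hr (by linarith), rpow_one, hr_def, one_div,
      rpow_inv_rpow (by positivity) ha.ne']
  have hb : |b| ^ ((1 + a) / a) = L ^ (1 / a) * (|b| * r) := by
    rw [add_div, div_self ha.ne', rpow_add' (abs_nonneg _) (by positivity),
      rpow_one, hr_def, div_rpow (abs_nonneg _) hL.le]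
    field_simp
  have key := h v
  rw [hbv, hvr] at key
  calc |b| ^ ((1 + a) / a)
      = (1 + a) / a * L ^ (1 / a) * (|b| * r - L / (1 + a) * (r * (|b| / L))) := by
        rw [hb]; field_simp; ring
    _ ≤ (1 + a) / a * L ^ (1 / a) * D := by gcongr

theorem ConvexOn.add_mul_sub_le_of_hasDerivAt {f : ℝ → ℝ} {d t : ℝ}
    (hconv : ConvexOn ℝ Set.univ f) (ht : HasDerivAt f d t) (u : ℝ) :
    f t + d * (u - t) ≤ f u := by
  rcases lt_trichotomy u t with hut | rfl | htu
  · have := hconv.slope_le_of_hasDerivAt (Set.mem_univ u) (Set.mem_univ t) hut ht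
    rw [slope_def_field, div_le_iff₀ (sub_pos.2 hut)] at this
    linarith
  · simp
  · have := hconv.le_slope_of_hasDerivAt (Set.mem_univ t) (Set.mem_univ u) htu ht
    rw [slope_def_field, le_div_iff₀ (sub_pos.2 htu)] at this
    linarith

theorem rpow_le_div_mul_rpow_add_one_sub_div {p q u : ℝ} (hp : 0 < p) (hpq : p ≤ q)
    (hu : 0 ≤ u) : u ^ p ≤ p / q * u ^ q + (1 - p / q) := by
  have hq : 0 < q := hp.trans_le hpq
  have h := geom_mean_le_arith_mean2_weighted (div_nonneg hp.le hq.le)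
    (sub_nonneg.2 ((div_le_one hq).2 hpq)) (rpow_nonneg hu q) zero_le_one (add_sub_cancel _ _)
  rwa [one_rpow, mul_one, mul_one, ← rpow_mul hu, mul_div_cancel₀ _ hq.ne'] at h

theorem rpow_one_add_le_of_rpow_conj_le {u D : ℝ} (ha : 0 < a) (hβ : 0 ≤ β)
    (haβ : a * β ≤ 1) (hu : 0 ≤ u) (h : u ^ ((1 + a) / a) ≤ (1 + a) / a * L ^ (1 / a) * D) :
    u ^ (1 + β) ≤ (1 + β) * L ^ (1 / a) * D + (1 - a * β) / (1 + a) := by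
  have hexp : 1 + β ≤ (1 + a) / a := by rw [le_div_iff₀ ha]; linarith
  have hyoung := rpow_le_div_mul_rpow_add_one_sub_div (by linarith) hexp hu
  have hweight : (1 + β) / ((1 + a) / a) = a * (1 + β) / (1 + a) := by field_simp
  calc u ^ (1 + β)
      ≤ (1 + β) / ((1 + a) / a) * ((1 + a) / a * L ^ (1 / a) * D)
        + (1 - (1 + β) / ((1 + a) / a)) := hyoung.trans (by gcongr)
    _ = (1 + β) * L ^ (1 / a) * D + (1 - a * β) / (1 + a) := by
      rw [hweight]; field_simp; ring

theorem abs_deriv_sub_rpow_conj_le_bregman (hL : 0 < L) (ha : 0 < a)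
    (hconv : ConvexOn ℝ Set.univ f) (hderiv : ∀ s, HasDerivAt f (f' s) s)
    (hhold : ∀ s t, |f' s - f' t| ≤ L * |s - t| ^ a) (s t : ℝ) :
    |f' s - f' t| ^ ((1 + a) / a) ≤ (1 + a) / a * L ^ (1 / a) * (f s - f t - f' t * (s - t)) := by
  refine abs_rpow_conj_le_of_forall_mul_sub_le hL ha fun v => ?_
  have htangent := hconv.add_mul_sub_le_of_hasDerivAt (hderiv t) (s - v)
  have hdescent := (abs_le.1 (abs_sub_sub_deriv_mul_le ha hderiv hhold s (s - v))).2
  rw [sub_sub_cancel_left, abs_neg] at hdescent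
  linarith

theorem abs_deriv_rpow_conj_le_of_nonneg (hL : 0 < L) (ha : 0 < a) (hnonneg : ∀ s, 0 ≤ f s)
    (hderiv : ∀ s, HasDerivAt f (f' s) s) (hhold : ∀ s t, |f' s - f' t| ≤ L * |s - t| ^ a)
    (s : ℝ) : |f' s| ^ ((1 + a) / a) ≤ (1 + a) / a * L ^ (1 / a) * f s := by
  refine abs_rpow_conj_le_of_forall_mul_sub_le hL ha fun v => ?_
  have hdescent := (abs_le.1 (abs_sub_sub_deriv_mul_le ha hderiv hhold s (s - v))).2
  rw [sub_sub_cancel_left, abs_neg] at hdescent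
  linarith [hnonneg (s - v)]

theorem abs_deriv_rpow_le_of_nonneg (hL : 0 < L) (ha : 0 < a) (hβ : 0 ≤ β) (haβ : a * β ≤ 1)
    (hnonneg : ∀ s, 0 ≤ f s) (hderiv : ∀ s, HasDerivAt f (f' s) s)
    (hhold : ∀ s t, |f' s - f' t| ≤ L * |s - t| ^ a) (s : ℝ) :
    |f' s| ^ (1 + β) ≤ (1 + β) * L ^ (1 / a) * f s + (1 - a * β) / (1 + a) :=
  rpow_one_add_le_of_rpow_conj_le ha hβ haβ (abs_nonneg _)
    (abs_deriv_rpow_conj_le_of_nonneg hL ha hnonneg hderiv hhold s)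

theorem abs_deriv_rpow_le_bregman (hL : 0 < L) (ha : 0 < a) (hβ : 0 ≤ β) (haβ : a * β ≤ 1)
    (hconv : ConvexOn ℝ Set.univ f) (hderiv : ∀ s, HasDerivAt f (f' s) s)
    (hhold : ∀ s t, |f' s - f' t| ≤ L * |s - t| ^ a) (s t : ℝ) :
    |f' s| ^ (1 + β) ≤ 2 ^ β * ((1 + β) * L ^ (1 / a) * (f s - f t - f' t * (s - t))
      + (1 - a * β) / (1 + a) + |f' t| ^ (1 + β)) := by
  have hsplit : |f' s| ^ (1 + β) ≤ 2 ^ β * (|f' s - f' t| ^ (1 + β) + |f' t| ^ (1 + β)) := by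
    have h := NNReal.rpow_add_le_mul_rpow_add_rpow ⟨_, abs_nonneg (f' s - f' t)⟩
      ⟨_, abs_nonneg (f' t)⟩ (le_add_of_nonneg_right hβ)
    rw [add_sub_cancel_left] at h
    calc |f' s| ^ (1 + β) ≤ (|f' s - f' t| + |f' t|) ^ (1 + β) := by
          gcongr; linarith [abs_sub_abs_le_abs_sub (f' s) (f' t)]
      _ ≤ _ := by exact_mod_cast h
  refine hsplit.trans ?_
  gcongr 2 ^ β * (?_ + _)
  exact rpow_one_add_le_of_rpow_conj_le ha hβ haβ (abs_nonneg _)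
    (abs_deriv_sub_rpow_conj_le_bregman hL ha hconv hderiv hhold s t)

end HolderDerivative

section LossIntegral

variable {Ω H : Type*} [MeasurableSpace Ω] {μ : Measure Ω}
  [NormedAddCommGroup H] [InnerProductSpace ℝ H] {k : Ω → H} {ℓ ℓ' : Ω → ℝ → ℝ} {f g : H}

theorem integrable_bregman (hg : Integrable (fun ω => ℓ ω ⟪g, k ω⟫) μ)
    (hf : Integrable (fun ω => ℓ ω ⟪f, k ω⟫) μ)
    (hgrad : Integrable (fun ω => ℓ' ω ⟪f, k ω⟫ • k ω) μ) :
    Integrable (fun ω => ℓ ω ⟪g, k ω⟫ - ℓ ω ⟪f, k ω⟫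
      - ℓ' ω ⟪f, k ω⟫ * (⟪g, k ω⟫ - ⟪f, k ω⟫)) μ := by
  refine (hg.sub hf).sub ((hgrad.const_inner (g - f)).congr (ae_of_all _ fun ω => ?_))
  simp only [real_inner_smul_right, inner_sub_left, mul_sub]

theorem integral_bregman [CompleteSpace H] (hg : Integrable (fun ω => ℓ ω ⟪g, k ω⟫) μ)
    (hf : Integrable (fun ω => ℓ ω ⟪f, k ω⟫) μ)
    (hgrad : Integrable (fun ω => ℓ' ω ⟪f, k ω⟫ • k ω) μ) :
    ∫ ω, (ℓ ω ⟪g, k ω⟫ - ℓ ω ⟪f, k ω⟫ - ℓ' ω ⟪f, k ω⟫ * (⟪g, k ω⟫ - ⟪f, k ω⟫)) ∂μ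
      = ∫ ω, ℓ ω ⟪g, k ω⟫ ∂μ - ∫ ω, ℓ ω ⟪f, k ω⟫ ∂μ - ⟪g - f, ∫ ω, ℓ' ω ⟪f, k ω⟫ • k ω ∂μ⟫ := by
  have hcross : ∀ ω, ℓ' ω ⟪f, k ω⟫ * (⟪g, k ω⟫ - ⟪f, k ω⟫) = ⟪g - f, ℓ' ω ⟪f, k ω⟫ • k ω⟫ := by
    intro ω
    rw [real_inner_smul_right, inner_sub_left]
  simp only [hcross]
  have hdiff : Integrable (fun ω => ℓ ω ⟪g, k ω⟫ - ℓ ω ⟪f, k ω⟫) μ := hg.sub hf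
  rw [integral_sub hdiff (hgrad.const_inner _), integral_sub hg hf, integral_inner hgrad]

theorem integrable_abs_deriv_rpow_of_nonneg [IsFiniteMeasure μ] {s : Ω → ℝ} {L a β : ℝ}
    (hL : 0 < L) (ha : 0 < a) (hβ : 0 ≤ β) (haβ : a * β ≤ 1) (hnonneg : ∀ ω x, 0 ≤ ℓ ω x)
    (hderiv : ∀ ω x, HasDerivAt (ℓ ω) (ℓ' ω x) x)
    (hhold : ∀ ω x y, |ℓ' ω x - ℓ' ω y| ≤ L * |x - y| ^ a)
    (hmeas : AEStronglyMeasurable (fun ω => ℓ' ω (s ω)) μ)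
    (hint : Integrable (fun ω => ℓ ω (s ω)) μ) :
    Integrable (fun ω => |ℓ' ω (s ω)| ^ (1 + β)) μ := by
  refine (hint.const_mul ((1 + β) * L ^ (1 / a)) |>.add (integrable_const ((1 - a * β) / (1 + a))))
    |>.mono' ((continuous_rpow_const (by linarith)).comp_aestronglyMeasurable hmeas.norm)
      (ae_of_all _ fun ω => ?_)
  rw [norm_of_nonneg (by positivity)]
  exact abs_deriv_rpow_le_of_nonneg hL ha hβ haβ (hnonneg ω) (hderiv ω) (hhold ω) _

end LossIntegral

theorem moment_bound_of_loss_derivative_general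
    {X : Type*} [MeasurableSpace X] {Y : Set ℝ}
    {H : Type*} [NormedAddCommGroup H] [InnerProductSpace ℝ H] [CompleteSpace H]
    [MeasurableSpace H] [BorelSpace H]
    (K : X → H) (hKmeas : Measurable K)
    (L α : ℝ) (hL : 0 < L) (hα : α ∈ Set.Ioc (0 : ℝ) 1)
    (φ φ' : ℝ → ℝ → ℝ)
    (hφ'meas : Measurable fun p : ℝ × ℝ => φ' p.1 p.2)
    (hφnonneg : ∀ y ∈ Y, ∀ s : ℝ, 0 ≤ φ y s)
    (hφconv : ∀ y ∈ Y, ConvexOn ℝ Set.univ (φ y))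
    (hφderiv : ∀ y ∈ Y, ∀ s : ℝ, HasDerivAt (φ y) (φ' y s) s)
    (hφholder : ∀ y ∈ Y, ∀ s t : ℝ, |φ' y s - φ' y t| ≤ L * |s - t| ^ α)
    (ρ : Measure (X × Y)) [IsProbabilityMeasure ρ]
    (E : H → ℝ) (hE : E = fun g : H => ∫ z : X × Y, φ (z.2 : ℝ) ⟪g, K z.1⟫ ∂ρ)
    (hEint : ∀ g : H, Integrable (fun z : X × Y => φ (z.2 : ℝ) ⟪g, K z.1⟫) ρ)
    (hgint : ∀ g : H, Integrable (fun z : X × Y => φ' (z.2 : ℝ) ⟪g, K z.1⟫ • K z.1) ρ)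
    (fH : H)
    (hgradH : (∫ z : X × Y, φ' (z.2 : ℝ) ⟪fH, K z.1⟫ • K z.1 ∂ρ) = 0)
    : ∀ β ∈ Set.Ioc (0 : ℝ) 1, ∀ g : H,
      (∫ z : X × Y, |φ' (z.2 : ℝ) ⟪g, K z.1⟫| ^ (1 + β) ∂ρ)
        ≤ (2 : ℝ) ^ β * L ^ (1 / α) * (1 + β) * (E g - E fH)
          + (2 : ℝ) ^ β * (1 - α * β) / (1 + α)
          + (2 : ℝ) ^ β * ∫ z : X × Y, |φ' (z.2 : ℝ) ⟪fH, K z.1⟫| ^ (1 + β) ∂ρ := by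
  rintro β ⟨hβ0, hβ1⟩ g
  obtain ⟨hα0, hα1⟩ := hα
  have hαβ : α * β ≤ 1 := by nlinarith
  set D : X × Y → ℝ := fun z => φ z.2 ⟪g, K z.1⟫ - φ z.2 ⟪fH, K z.1⟫
    - φ' z.2 ⟪fH, K z.1⟫ * (⟪g, K z.1⟫ - ⟪fH, K z.1⟫) with hD
  have hDint : Integrable D ρ := integrable_bregman (hEint g) (hEint fH) (hgint fH)
  have hexcess : ∫ z, D z ∂ρ = E g - E fH := by
    rw [hD, integral_bregman (hEint g) (hEint fH) (hgint fH), hgradH, inner_zero_right, sub_zero,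
      hE]
  have hpair : Measurable fun z : X × Y => ((z.2 : ℝ), ⟪fH, K z.1⟫) := by fun_prop
  have hmomentH : Integrable (fun z : X × Y => |φ' z.2 ⟪fH, K z.1⟫| ^ (1 + β)) ρ :=
    integrable_abs_deriv_rpow_of_nonneg hL hα0 hβ0.le hαβ (fun z => hφnonneg _ z.2.2)
      (fun z => hφderiv _ z.2.2) (fun z => hφholder _ z.2.2)
      (hφ'meas.comp hpair).aestronglyMeasurable (hEint fH)
  have hbound : Integrable (fun z => (1 + β) * L ^ (1 / α) * D z + (1 - α * β) / (1 + α)) ρ :=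
    (hDint.const_mul _).add (integrable_const _)
  calc ∫ z, |φ' z.2 ⟪g, K z.1⟫| ^ (1 + β) ∂ρ
      ≤ ∫ z, 2 ^ β * ((1 + β) * L ^ (1 / α) * D z + (1 - α * β) / (1 + α)
          + |φ' z.2 ⟪fH, K z.1⟫| ^ (1 + β)) ∂ρ :=
        integral_mono_of_nonneg (ae_of_all _ fun z => by positivity)
          ((hbound.add hmomentH).const_mul _)
          (ae_of_all _ fun z => abs_deriv_rpow_le_bregman hL hα0 hβ0.le hαβ (hφconv _ z.2.2)
            (hφderiv _ z.2.2) (hφholder _ z.2.2) _ _)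
    _ = _ := by
      rw [integral_const_mul, integral_add hbound hmomentH,
        integral_add (hDint.const_mul _) (integrable_const _), integral_const_mul, hexcess,
        integral_const, probReal_univ, one_smul]
      ring

/-- Lemma 2 (gradient bound): under Assumption 1, if `f_H` minimizes the generalization error
`E` over `H` (so `∇E(f_H) = 0`), then for every `f ∈ H` and `β ∈ (0,1]`,
`∫ |φ′(y, f(x))|^{1+β} dρ` is bounded by excess generalization error terms. -/
theorem moment_bound_of_loss_derivative
    {X : Type*} [MeasurableSpace X] {Y : Set ℝ}
    {H : Type*} [NormedAddCommGroup H] [InnerProductSpace ℝ H] [CompleteSpace H]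
    [MeasurableSpace H] [BorelSpace H] [SecondCountableTopology H]
    (K : X → H) (hKmeas : Measurable K)
    (κ : ℝ) (hκ : ∀ x : X, ‖K x‖ ≤ κ)
    (L α : ℝ) (hL : 0 < L) (hα : α ∈ Set.Ioc (0 : ℝ) 1)
    (φ φ' : ℝ → ℝ → ℝ)
    (hφmeas : Measurable fun p : ℝ × ℝ => φ p.1 p.2)
    (hφ'meas : Measurable fun p : ℝ × ℝ => φ' p.1 p.2)
    (hφnonneg : ∀ y ∈ Y, ∀ s : ℝ, 0 ≤ φ y s)
    (hφconv : ∀ y ∈ Y, ConvexOn ℝ Set.univ (φ y))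
    (hφderiv : ∀ y ∈ Y, ∀ s : ℝ, HasDerivAt (φ y) (φ' y s) s)
    (hφholder : ∀ y ∈ Y, ∀ s t : ℝ, |φ' y s - φ' y t| ≤ L * |s - t| ^ α)
    (ρ : Measure (X × Y)) [IsProbabilityMeasure ρ]
    (E : H → ℝ) (hE : E = fun g : H => ∫ z : X × Y, φ (z.2 : ℝ) ⟪g, K z.1⟫ ∂ρ)
    (hEint : ∀ g : H, Integrable (fun z : X × Y => φ (z.2 : ℝ) ⟪g, K z.1⟫) ρ)
    (hgint : ∀ g : H, Integrable (fun z : X × Y => φ' (z.2 : ℝ) ⟪g, K z.1⟫ • K z.1) ρ)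
    (fH : H) (hmin : ∀ g : H, E fH ≤ E g)
    (hgradH : (∫ z : X × Y, φ' (z.2 : ℝ) ⟪fH, K z.1⟫ • K z.1 ∂ρ) = 0)
    (M0 MH : ℝ) (hM0 : ∀ z : X × Y, φ (z.2 : ℝ) 0 ≤ M0)
    (hMH : ∀ z : X × Y, φ (z.2 : ℝ) ⟪fH, K z.1⟫ ≤ MH)
    : ∀ β ∈ Set.Ioc (0 : ℝ) 1, ∀ g : H,
      (∫ z : X × Y, |φ' (z.2 : ℝ) ⟪g, K z.1⟫| ^ (1 + β) ∂ρ)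
        ≤ (2 : ℝ) ^ β * L ^ (1 / α) * (1 + β) * (E g - E fH)
          + (2 : ℝ) ^ β * (1 - α * β) / (1 + α)
          + (2 : ℝ) ^ β * ∫ z : X × Y, |φ' (z.2 : ℝ) ⟪fH, K z.1⟫| ^ (1 + β) ∂ρ :=
  moment_bound_of_loss_derivative_general K hKmeas L α hL hα φ φ' hφ'meas hφnonneg hφconv hφderiv
    hφholder ρ E hE hEint hgint fH hgradH
end

section
/- Let {f_t}_{t∈ℕ} be the online gradient descent iterates. Suppose that for every y ∈ Y the function φ(y,·) : ℝ → [0,∞) is convex and its derivative φ′(y,·) is (1,L)-Hölder continuous (i.e., |φ′(y,s) − φ′(y,s̃)| ≤ L|s − s̃| for all s, s̃). Assume η_t ≤ 1/(6Lκ²) for all t ∈ ℕ and E(f_1) ≠ E(f_H). If lim_{t→∞} 𝔼[E(f_t)] = E(f_H), then ∑_{t=1}^∞ η_t = ∞. -/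
/-!
Let `b t = 𝔼 E(f t) - E(f_H)`. Convexity gives
`E(f (t+1)) ≥ E(f t) - η t * φ'(y_t, f t (x_t)) * ⟪∇E(f t), K x_t⟫`. As `f t` is a function of
`z_1, …, z_{t-1}`, it is independent of `z_t`, so in expectation the stochastic gradient becomes
`∇E(f t)` and `b (t+1) ≥ b t - η t * 𝔼 ‖∇E(f t)‖²`. Since `E` is `Lκ²`-smooth and minimal at `f_H`,
`‖∇E(f)‖² ≤ 4Lκ² (E(f) - E(f_H))`, hence `b (t+1) ≥ (1 - 4Lκ² η t) b t` with `4Lκ² η t ≤ 2/3`.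
Thus `b t > 0`, and if `∑ η t < ∞` the tail products `∏ (1 - 4Lκ² η t)` stay above `1/2`, so `b t`
cannot tend to `0`. Integrability comes from bounding each iterate uniformly in `ω`, which works
because the self-bounding inequality `φ'(y, s)² ≤ 4L φ(y, s)` makes `φ'(·, 0)` bounded.
-/

open MeasureTheory ProbabilityTheory Filter Real
open scoped RealInnerProductSpace NNReal

namespace ConvexOn

variable {g g' : ℝ → ℝ} {L : ℝ≥0}

theorem add_mul_sub_le_of_hasDerivAt_s6 {a d : ℝ} (hconv : ConvexOn ℝ Set.univ g)
    (hg : HasDerivAt g d a) (b : ℝ) : g a + d * (b - a) ≤ g b := by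
  rcases lt_trichotomy a b with hab | rfl | hba
  · have := hconv.le_slope_of_hasDerivAt (Set.mem_univ a) (Set.mem_univ b) hab hg
    rw [slope_def_field, le_div_iff₀ (sub_pos.2 hab)] at this
    linarith
  · simp
  · have := hconv.slope_le_of_hasDerivAt (Set.mem_univ b) (Set.mem_univ a) hba hg
    rw [slope_def_field, div_le_iff₀ (sub_pos.2 hba)] at this
    linarith

theorem le_add_mul_sub_add_mul_sq (hconv : ConvexOn ℝ Set.univ g)
    (hg : ∀ s, HasDerivAt g (g' s) s) (hlip : LipschitzWith L g') (a b : ℝ) :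
    g b ≤ g a + g' a * (b - a) + L * (b - a) ^ 2 := by
  have htangent := hconv.add_mul_sub_le_of_hasDerivAt_s6 (hg b) a
  have hcross : (g' b - g' a) * (b - a) ≤ L * (b - a) ^ 2 :=
    calc (g' b - g' a) * (b - a) ≤ |g' b - g' a| * |b - a| := by
          rw [← abs_mul]; exact le_abs_self _
      _ ≤ L * |b - a| * |b - a| := by gcongr; exact hlip.dist_le_mul b a
      _ = L * (b - a) ^ 2 := by rw [mul_assoc, ← sq, sq_abs]
  linarith

theorem sq_deriv_le_of_nonneg (hL : 0 < L) (hconv : ConvexOn ℝ Set.univ g)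
    (hg : ∀ s, HasDerivAt g (g' s) s) (hlip : LipschitzWith L g') (hnonneg : ∀ s, 0 ≤ g s)
    (a : ℝ) : g' a ^ 2 ≤ 4 * L * g a := by
  have hdescent := hconv.le_add_mul_sub_add_mul_sq hg hlip a (a - g' a / (2 * L))
  have hmin : g a + g' a * (a - g' a / (2 * L) - a) + L * (a - g' a / (2 * L) - a) ^ 2
      = g a - g' a ^ 2 / (4 * L) := by
    field_simp; ring
  have : g' a ^ 2 / (4 * L) ≤ g a := by linarith [hnonneg (a - g' a / (2 * L))]
  rwa [div_le_iff₀ (by positivity), mul_comm] at this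

theorem abs_deriv_le_sqrt_add (hL : 0 < L) (hconv : ConvexOn ℝ Set.univ g)
    (hg : ∀ s, HasDerivAt g (g' s) s) (hlip : LipschitzWith L g') (hnonneg : ∀ s, 0 ≤ g s)
    (s : ℝ) : |g' s| ≤ √(4 * L * g 0) + L * |s| := by
  have h0 : |g' 0| ≤ √(4 * L * g 0) :=
    Real.abs_le_sqrt (hconv.sq_deriv_le_of_nonneg hL hg hlip hnonneg 0)
  have hs : |g' s - g' 0| ≤ L * |s| := by simpa [Real.dist_eq] using hlip.dist_le_mul s 0
  linarith [abs_sub_abs_le_abs_sub (g' s) (g' 0)]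

end ConvexOn

theorem not_summable_of_one_sub_mul_le {a b : ℕ → ℝ} (ha : ∀ t, 0 ≤ a t) (ha1 : ∀ t, a t < 1)
    (hb : ∀ t, (1 - a t) * b t ≤ b (t + 1)) (hb0 : 0 < b 0)
    (hlim : Tendsto b atTop (nhds 0)) : ¬ Summable a := by
  intro hsum
  have hpos : ∀ t, 0 < b t := by
    intro t
    induction t with
    | zero => exact hb0
    | succ t ih => exact (mul_pos (sub_pos.2 (ha1 t)) ih).trans_le (hb t)
  obtain ⟨N, hN⟩ : ∃ N, ∑' k, a (k + N) ≤ 1 / 2 :=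
    ((tendsto_sum_nat_add a).eventually (eventually_le_nhds one_half_pos)).exists
  have hprod : ∀ n, b N * (1 - ∑ k ∈ Finset.range n, a (N + k)) ≤ b (N + n) := by
    intro n
    induction n with
    | zero => simp
    | succ n ih =>
      rw [Finset.sum_range_succ, ← add_assoc]
      have hS : 0 ≤ ∑ k ∈ Finset.range n, a (N + k) := Finset.sum_nonneg fun k _ => ha _
      have := mul_le_mul_of_nonneg_left ih (sub_nonneg.2 (ha1 (N + n)).le)
      nlinarith [hb (N + n), mul_nonneg (mul_nonneg (hpos N).le (ha (N + n))) hS]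
  have hhalf : ∀ n, b N / 2 ≤ b (N + n) := by
    intro n
    have hS : ∑ k ∈ Finset.range n, a (N + k) ≤ 1 / 2 := by
      refine le_trans ?_ hN
      simp_rw [add_comm N]
      exact ((summable_nat_add_iff N).2 hsum).sum_le_tsum _ fun k _ => ha _
    nlinarith [hprod n, hpos N]
  have := ge_of_tendsto hlim (eventually_atTop.2 ⟨N, fun n hn => by
    simpa [Nat.add_sub_cancel' hn] using hhalf (n - N)⟩)
  linarith [hpos N]

section InnerProductSpace

variable {H : Type*} [NormedAddCommGroup H] [InnerProductSpace ℝ H]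

theorem abs_inner_le_mul_of_norm_le {Z : Type*} {k : Z → H} {κ : ℝ} (hk : ∀ z, ‖k z‖ ≤ κ)
    (g : H) (z : Z) : |⟪g, k z⟫| ≤ κ * ‖g‖ :=
  (abs_real_inner_le_norm g (k z)).trans (by rw [mul_comm]; gcongr; exact hk z)

theorem hasFDerivAt_of_abs_sub_sub_inner_le {F : H → ℝ} {g D : H} {C : ℝ}
    (hF : ∀ h, |F h - F g - ⟪D, h - g⟫| ≤ C * ‖h - g‖ ^ 2) :
    HasFDerivAt F (innerSL ℝ D) g := by
  refine HasFDerivAt.of_isLittleO (Asymptotics.IsBigO.trans_isLittleO ?_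
    (Asymptotics.isLittleO_pow_sub_sub g one_lt_two))
  refine Asymptotics.IsBigO.of_bound C (Eventually.of_forall fun h => ?_)
  simpa [Real.norm_eq_abs] using hF h

theorem norm_sq_le_of_le_add_inner_add_mul_sq {F : H → ℝ} {D : H → H} {β : ℝ} {m : H}
    (hβ : 0 ≤ β) (hF : ∀ g h, F h ≤ F g + ⟪D g, h - g⟫ + β * ‖h - g‖ ^ 2)
    (hm : ∀ g, F m ≤ F g) (g : H) :
    ‖D g‖ ^ 2 ≤ 4 * β * (F g - F m) := by
  have hquad : ∀ t : ℝ, 0 ≤ β * ‖D g‖ ^ 2 * (t * t) + -‖D g‖ ^ 2 * t + (F g - F m) := by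
    intro t
    have hstep := hF g (g - t • D g)
    rw [sub_sub_cancel_left, inner_neg_right, norm_neg, real_inner_smul_right,
      real_inner_self_eq_norm_sq, norm_smul, mul_pow, Real.norm_eq_abs, sq_abs] at hstep
    nlinarith [hm (g - t • D g)]
  have hdiscrim := discrim_le_zero hquad
  rw [discrim] at hdiscrim
  nlinarith [hm g, sq_nonneg ‖D g‖, mul_nonneg hβ (sub_nonneg.2 (hm g))]

end InnerProductSpace

theorem ProbabilityTheory.IndepFun.integral_comp_eq_integral_integral
    {Ω α β E : Type*} [MeasurableSpace Ω] [MeasurableSpace α] [MeasurableSpace β]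
    [NormedAddCommGroup E] [NormedSpace ℝ E] [CompleteSpace E]
    {P : Measure Ω} [IsFiniteMeasure P] {V : Ω → α} {W : Ω → β}
    (hVW : IndepFun V W P) (hV : Measurable V) (hW : Measurable W) {G : α → β → E}
    (hG : StronglyMeasurable (Function.uncurry G)) (hint : Integrable (fun ω => G (V ω) (W ω)) P) :
    ∫ ω, G (V ω) (W ω) ∂P = ∫ ω, ∫ b, G (V ω) b ∂(P.map W) ∂P := by
  have hmap : P.map (fun ω => (V ω, W ω)) = (P.map V).prod (P.map W) :=
    (indepFun_iff_map_prod_eq_prod_map_map hV.aemeasurable hW.aemeasurable).1 hVW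
  have hVW' : Measurable fun ω => (V ω, W ω) := hV.prodMk hW
  have hGint : Integrable (Function.uncurry G) ((P.map V).prod (P.map W)) := by
    rw [← hmap]
    exact (integrable_map_measure hG.aestronglyMeasurable hVW'.aemeasurable).2 hint
  calc ∫ ω, G (V ω) (W ω) ∂P
      = ∫ p, Function.uncurry G p ∂(P.map fun ω => (V ω, W ω)) :=
        (integral_map hVW'.aemeasurable hG.aestronglyMeasurable).symm
    _ = ∫ a, ∫ b, G a b ∂(P.map W) ∂(P.map V) := by rw [hmap]; exact integral_prod _ hGint
    _ = ∫ ω, ∫ b, G (V ω) b ∂(P.map W) ∂P :=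
        integral_map hV.aemeasurable hG.integral_prod_right'.aestronglyMeasurable

section PastMeasurableSpace

variable {Ω Z : Type*} [mZ : MeasurableSpace Z] {zs : ℕ → Ω → Z}

abbrev pastMeasurableSpace (zs : ℕ → Ω → Z) (t : ℕ) : MeasurableSpace Ω :=
  ⨆ i ∈ Set.Iio t, mZ.comap (zs i)

theorem pastMeasurableSpace_mono : Monotone (pastMeasurableSpace zs) :=
  fun _ _ hst => biSup_mono fun _ hi => lt_of_lt_of_le hi hst

theorem measurable_pastMeasurableSpace_succ (t : ℕ) :
    Measurable[pastMeasurableSpace zs (t + 1)] (zs t) :=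
  Measurable.of_comap_le (le_biSup (fun i => mZ.comap (zs i)) (Nat.lt_succ_self t))

theorem pastMeasurableSpace_le [mΩ : MeasurableSpace Ω] (hzs : ∀ t, Measurable (zs t)) (t : ℕ) :
    pastMeasurableSpace zs t ≤ mΩ :=
  iSup₂_le fun i _ => (hzs i).comap_le

theorem ProbabilityTheory.iIndepFun.indepFun_of_measurable_pastMeasurableSpace
    [MeasurableSpace Ω] {P : Measure Ω} {β : Type*} [MeasurableSpace β] {V : Ω → β} {t : ℕ}
    (hiid : iIndepFun zs P) (hzs : ∀ t, Measurable (zs t))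
    (hV : Measurable[pastMeasurableSpace zs t] V) : IndepFun V (zs t) P := by
  have h := indep_iSup_of_disjoint (fun i => (hzs i).comap_le) hiid.iIndep
    (Set.disjoint_singleton_right.2 (lt_irrefl t) : Disjoint (Set.Iio t) {t})
  rw [iSup_singleton] at h
  exact indep_of_indep_of_le_left h hV.comap_le

end PastMeasurableSpace

structure IsSmoothConvexLoss {Z : Type*} (ℓ ℓ' : Z → ℝ → ℝ) (L : ℝ≥0) : Prop where
  convexOn : ∀ z, ConvexOn ℝ Set.univ (ℓ z)
  hasDerivAt : ∀ z s, HasDerivAt (ℓ z) (ℓ' z s) s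
  lipschitzWith : ∀ z, LipschitzWith L (ℓ' z)

theorem IsSmoothConvexLoss.abs_deriv_le {Z : Type*} {ℓ ℓ' : Z → ℝ → ℝ} {L : ℝ≥0} {M : ℝ}
    (hℓ : IsSmoothConvexLoss ℓ ℓ' L) (hL : 0 < L) (hnonneg : ∀ z s, 0 ≤ ℓ z s)
    (hM : ∀ z, ℓ z 0 ≤ M) (z : Z) (s : ℝ) : |ℓ' z s| ≤ √(4 * L * M) + L * |s| := by
  have := (hℓ.convexOn z).abs_deriv_le_sqrt_add hL (hℓ.hasDerivAt z) (hℓ.lipschitzWith z)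
    (hnonneg z) s
  exact this.trans (by gcongr; exact hM z)

section Risk

variable {Z H : Type*} [MeasurableSpace Z] [NormedAddCommGroup H] [InnerProductSpace ℝ H]
  {ρ : Measure Z} {ℓ ℓ' : Z → ℝ → ℝ} {k : Z → H} {κ : ℝ} {L : ℝ≥0}

variable (ρ ℓ k) in
/-- The generalization error `E`, with `z ↦ (ℓ z, k z)` standing for `(x, y) ↦ (φ(y, ·), K x)`. -/
noncomputable def risk (g : H) : ℝ := ∫ z, ℓ z ⟪g, k z⟫ ∂ρ

variable (ρ ℓ' k) in
noncomputable def riskGrad (g : H) : H := ∫ z, ℓ' z ⟪g, k z⟫ • k z ∂ρ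

theorem integrable_mul_inner {g : H} (hg : Integrable (fun z => ℓ' z ⟪g, k z⟫ • k z) ρ) (h : H) :
    Integrable (fun z => ℓ' z ⟪g, k z⟫ * ⟪h, k z⟫) ρ := by
  simpa [real_inner_smul_right, mul_comm] using (innerSL ℝ h).integrable_comp hg

theorem inner_riskGrad [CompleteSpace H] {g : H}
    (hg : Integrable (fun z => ℓ' z ⟪g, k z⟫ • k z) ρ) (h : H) :
    ⟪h, riskGrad ρ ℓ' k g⟫ = ∫ z, ℓ' z ⟪g, k z⟫ * ⟪h, k z⟫ ∂ρ := by
  simp_rw [riskGrad, ← integral_inner hg, real_inner_smul_right]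

theorem risk_add_inner_riskGrad_le [CompleteSpace H] (hconv : ∀ z, ConvexOn ℝ Set.univ (ℓ z))
    (hderiv : ∀ z s, HasDerivAt (ℓ z) (ℓ' z s) s)
    (hint : ∀ g, Integrable (fun z => ℓ z ⟪g, k z⟫) ρ)
    (hgint : ∀ g, Integrable (fun z => ℓ' z ⟪g, k z⟫ • k z) ρ) (g h : H) :
    risk ρ ℓ k g + ⟪riskGrad ρ ℓ' k g, h - g⟫ ≤ risk ρ ℓ k h := by
  rw [real_inner_comm, inner_riskGrad (hgint g), risk, risk,
    ← integral_add (hint g) (integrable_mul_inner (hgint g) _)]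
  refine integral_mono ((hint g).add (integrable_mul_inner (hgint g) _)) (hint h) fun z => ?_
  have := (hconv z).add_mul_sub_le_of_hasDerivAt_s6 (hderiv z ⟪g, k z⟫) ⟪h, k z⟫
  simpa only [inner_sub_left] using this

theorem risk_le_add_inner_riskGrad_add [CompleteSpace H] [IsProbabilityMeasure ρ]
    (hℓ : IsSmoothConvexLoss ℓ ℓ' L) (hk : ∀ z, ‖k z‖ ≤ κ)
    (hint : ∀ g, Integrable (fun z => ℓ z ⟪g, k z⟫) ρ)
    (hgint : ∀ g, Integrable (fun z => ℓ' z ⟪g, k z⟫ • k z) ρ) (g h : H) :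
    risk ρ ℓ k h ≤ risk ρ ℓ k g + ⟪riskGrad ρ ℓ' k g, h - g⟫ + L * κ ^ 2 * ‖h - g‖ ^ 2 := by
  have hlin : Integrable (fun z => ℓ z ⟪g, k z⟫ + ℓ' z ⟪g, k z⟫ * ⟪h - g, k z⟫) ρ :=
    (hint g).add (integrable_mul_inner (hgint g) (h - g))
  rw [real_inner_comm, inner_riskGrad (hgint g), risk, risk,
    ← integral_add (hint g) (integrable_mul_inner (hgint g) _)]
  have hpt : ∀ z, ℓ z ⟪h, k z⟫
      ≤ ℓ z ⟪g, k z⟫ + ℓ' z ⟪g, k z⟫ * ⟪h - g, k z⟫ + L * κ ^ 2 * ‖h - g‖ ^ 2 := by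
    intro z
    have hdescent := (hℓ.convexOn z).le_add_mul_sub_add_mul_sq (hℓ.hasDerivAt z)
      (hℓ.lipschitzWith z) ⟪g, k z⟫ ⟪h, k z⟫
    have hsq : ⟪h - g, k z⟫ ^ 2 ≤ κ ^ 2 * ‖h - g‖ ^ 2 := by
      rw [← sq_abs, ← mul_pow]
      exact pow_le_pow_left₀ (abs_nonneg _) (abs_inner_le_mul_of_norm_le hk _ z) 2
    rw [← inner_sub_left] at hdescent
    nlinarith [mul_le_mul_of_nonneg_left hsq L.2]
  calc ∫ z, ℓ z ⟪h, k z⟫ ∂ρ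
      ≤ ∫ z, ℓ z ⟪g, k z⟫ + ℓ' z ⟪g, k z⟫ * ⟪h - g, k z⟫ + L * κ ^ 2 * ‖h - g‖ ^ 2 ∂ρ :=
        integral_mono (hint h) (hlin.add (integrable_const _)) hpt
    _ = _ := by rw [integral_add hlin (integrable_const _), integral_const, probReal_univ, one_smul]

theorem abs_risk_sub_sub_inner_riskGrad_le [CompleteSpace H] [IsProbabilityMeasure ρ]
    (hℓ : IsSmoothConvexLoss ℓ ℓ' L) (hk : ∀ z, ‖k z‖ ≤ κ)
    (hint : ∀ g, Integrable (fun z => ℓ z ⟪g, k z⟫) ρ)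
    (hgint : ∀ g, Integrable (fun z => ℓ' z ⟪g, k z⟫ • k z) ρ) (g h : H) :
    |risk ρ ℓ k h - risk ρ ℓ k g - ⟪riskGrad ρ ℓ' k g, h - g⟫| ≤ L * κ ^ 2 * ‖h - g‖ ^ 2 := by
  have hlow := risk_add_inner_riskGrad_le hℓ.convexOn hℓ.hasDerivAt hint hgint g h
  have hup := risk_le_add_inner_riskGrad_add hℓ hk hint hgint g h
  rw [abs_le]
  constructor <;> nlinarith [L.2, sq_nonneg κ, sq_nonneg ‖h - g‖]

theorem hasFDerivAt_risk [CompleteSpace H] [IsProbabilityMeasure ρ]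
    (hℓ : IsSmoothConvexLoss ℓ ℓ' L) (hk : ∀ z, ‖k z‖ ≤ κ)
    (hint : ∀ g, Integrable (fun z => ℓ z ⟪g, k z⟫) ρ)
    (hgint : ∀ g, Integrable (fun z => ℓ' z ⟪g, k z⟫ • k z) ρ) (g : H) :
    HasFDerivAt (risk ρ ℓ k) (innerSL ℝ (riskGrad ρ ℓ' k g)) g :=
  hasFDerivAt_of_abs_sub_sub_inner_le (abs_risk_sub_sub_inner_riskGrad_le hℓ hk hint hgint g)

theorem continuous_risk [CompleteSpace H] [IsProbabilityMeasure ρ]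
    (hℓ : IsSmoothConvexLoss ℓ ℓ' L) (hk : ∀ z, ‖k z‖ ≤ κ)
    (hint : ∀ g, Integrable (fun z => ℓ z ⟪g, k z⟫) ρ)
    (hgint : ∀ g, Integrable (fun z => ℓ' z ⟪g, k z⟫ • k z) ρ) : Continuous (risk ρ ℓ k) :=
  continuous_iff_continuousAt.2 fun g => (hasFDerivAt_risk hℓ hk hint hgint g).continuousAt

theorem lipschitzWith_riskGrad [IsProbabilityMeasure ρ] (hlip : ∀ z, LipschitzWith L (ℓ' z))
    (hk : ∀ z, ‖k z‖ ≤ κ) (hgint : ∀ g, Integrable (fun z => ℓ' z ⟪g, k z⟫ • k z) ρ) :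
    LipschitzWith (L * κ ^ 2).toNNReal (riskGrad ρ ℓ' k) := by
  refine LipschitzWith.of_dist_le' fun g h => ?_
  rw [dist_eq_norm, dist_eq_norm, riskGrad, riskGrad, ← integral_sub (hgint g) (hgint h),
    ← mul_one (L * κ ^ 2 * ‖g - h‖), ← probReal_univ (μ := ρ)]
  refine norm_integral_le_of_norm_le_const (Eventually.of_forall fun z => ?_)
  have hκ : 0 ≤ κ := (norm_nonneg _).trans (hk z)
  rw [← sub_smul, norm_smul, Real.norm_eq_abs]
  calc |ℓ' z ⟪g, k z⟫ - ℓ' z ⟪h, k z⟫| * ‖k z‖ ≤ L * (κ * ‖g - h‖) * κ := by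
        gcongr
        · rw [← Real.dist_eq]
          refine (hlip z).dist_le_mul_of_le ?_
          rw [Real.dist_eq, ← inner_sub_left]
          exact abs_inner_le_mul_of_norm_le hk _ z
        · exact hk z
    _ = L * κ ^ 2 * ‖g - h‖ := by ring

theorem norm_riskGrad_le [IsProbabilityMeasure ρ] (hlip : ∀ z, LipschitzWith L (ℓ' z))
    (hk : ∀ z, ‖k z‖ ≤ κ) (hgint : ∀ g, Integrable (fun z => ℓ' z ⟪g, k z⟫ • k z) ρ) (g : H) :
    ‖riskGrad ρ ℓ' k g‖ ≤ ‖riskGrad ρ ℓ' k 0‖ + L * κ ^ 2 * ‖g‖ := by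
  have := (lipschitzWith_riskGrad hlip hk hgint).dist_le_mul g 0
  rw [dist_eq_norm, dist_zero_right, Real.coe_toNNReal _ (by positivity)] at this
  linarith [norm_le_insert' (riskGrad ρ ℓ' k g) (riskGrad ρ ℓ' k 0)]

theorem measurable_deriv_mul_inner_riskGrad [IsProbabilityMeasure ρ] [MeasurableSpace H]
    [BorelSpace H] [SecondCountableTopology H]
    (hlip : ∀ z, LipschitzWith L (ℓ' z)) (hk : ∀ z, ‖k z‖ ≤ κ) (hkm : Measurable k)
    (hℓ'm : Measurable (Function.uncurry ℓ'))
    (hgint : ∀ g, Integrable (fun z => ℓ' z ⟪g, k z⟫ • k z) ρ) :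
    Measurable fun p : H × Z => ℓ' p.2 ⟪p.1, k p.2⟫ * ⟪riskGrad ρ ℓ' k p.1, k p.2⟫ :=
  (hℓ'm.comp (measurable_snd.prodMk (measurable_fst.inner (hkm.comp measurable_snd)))).mul
    (((lipschitzWith_riskGrad hlip hk hgint).continuous.measurable.comp measurable_fst).inner
      (hkm.comp measurable_snd))

end Risk

section OnlineGradientDescent

variable {Ω Z H : Type*} [NormedAddCommGroup H] [InnerProductSpace ℝ H] {ℓ ℓ' : Z → ℝ → ℝ}
  {k : Z → H} {κ C B : ℝ} {L : ℝ≥0} {zs : ℕ → Ω → Z} {η : ℕ → ℝ} {f : ℕ → Ω → H}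

variable (ℓ' k) in
def sgdStep (a : ℝ) (z : Z) (g : H) : H := g - (a * ℓ' z ⟪g, k z⟫) • k z

theorem abs_deriv_inner_le (hgrowth : ∀ z s, |ℓ' z s| ≤ C + L * |s|) (hk : ∀ z, ‖k z‖ ≤ κ)
    {g : H} (hg : ‖g‖ ≤ B) (z : Z) : |ℓ' z ⟪g, k z⟫| ≤ C + L * (κ * B) := by
  have hκ : 0 ≤ κ := (norm_nonneg _).trans (hk z)
  calc |ℓ' z ⟪g, k z⟫| ≤ C + L * |⟪g, k z⟫| := hgrowth z _
    _ ≤ C + L * (κ * B) := by gcongr; exact (abs_inner_le_mul_of_norm_le hk g z).trans (by gcongr)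

theorem norm_sgdStep_le (hgrowth : ∀ z s, |ℓ' z s| ≤ C + L * |s|) (hk : ∀ z, ‖k z‖ ≤ κ)
    {g : H} (hg : ‖g‖ ≤ B) (a : ℝ) (z : Z) :
    ‖sgdStep ℓ' k a z g‖ ≤ B + |a| * (C + L * (κ * B)) * κ := by
  have hderiv := abs_deriv_inner_le hgrowth hk hg z
  calc ‖sgdStep ℓ' k a z g‖ ≤ ‖g‖ + |a| * |ℓ' z ⟪g, k z⟫| * ‖k z‖ := by
        rw [sgdStep, ← abs_mul, ← Real.norm_eq_abs, ← norm_smul]; exact norm_sub_le _ _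
    _ ≤ B + |a| * (C + L * (κ * B)) * κ := by
        have : 0 ≤ C + L * (κ * B) := (abs_nonneg _).trans hderiv
        gcongr
        exact hk z

theorem measurable_sgdStep [MeasurableSpace Z] [MeasurableSpace H] [BorelSpace H]
    [SecondCountableTopology H]
    (hkm : Measurable k) (hℓ'm : Measurable (Function.uncurry ℓ')) (a : ℝ) :
    Measurable fun p : H × Z => sgdStep ℓ' k a p.2 p.1 :=
  measurable_fst.sub ((measurable_const.mul (hℓ'm.comp (measurable_snd.prodMk
    (measurable_fst.inner (hkm.comp measurable_snd))))).smul (hkm.comp measurable_snd))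

theorem risk_sub_mul_le_risk_sgdStep [MeasurableSpace Z] [CompleteSpace H] {ρ : Measure Z}
    (hconv : ∀ z, ConvexOn ℝ Set.univ (ℓ z))
    (hderiv : ∀ z s, HasDerivAt (ℓ z) (ℓ' z s) s)
    (hint : ∀ g, Integrable (fun z => ℓ z ⟪g, k z⟫) ρ)
    (hgint : ∀ g, Integrable (fun z => ℓ' z ⟪g, k z⟫ • k z) ρ) (a : ℝ) (z : Z) (g : H) :
    risk ρ ℓ k g - a * (ℓ' z ⟪g, k z⟫ * ⟪riskGrad ρ ℓ' k g, k z⟫)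
      ≤ risk ρ ℓ k (sgdStep ℓ' k a z g) := by
  have := risk_add_inner_riskGrad_le hconv hderiv hint hgint g (sgdStep ℓ' k a z g)
  rwa [sgdStep, sub_sub_cancel_left, inner_neg_right, real_inner_smul_right, mul_assoc,
    ← sub_eq_add_neg] at this

theorem exists_norm_iterate_le (hgrowth : ∀ z s, |ℓ' z s| ≤ C + L * |s|)
    (hk : ∀ z, ‖k z‖ ≤ κ) (hf1 : ∀ ω, f 1 ω = 0)
    (hfrec : ∀ t, 1 ≤ t → ∀ ω, f (t + 1) ω = sgdStep ℓ' k (η t) (zs t ω) (f t ω)) :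
    ∀ t, 1 ≤ t → ∃ B, ∀ ω, ‖f t ω‖ ≤ B := by
  refine Nat.le_induction ⟨0, fun ω => by simp [hf1]⟩ fun t ht ⟨B, hB⟩ => ?_
  exact ⟨_, fun ω => hfrec t ht ω ▸ norm_sgdStep_le hgrowth hk (hB ω) _ _⟩

theorem measurable_pastMeasurableSpace_iterate [MeasurableSpace Z] [MeasurableSpace H]
    [BorelSpace H] [SecondCountableTopology H] (hkm : Measurable k)
    (hℓ'm : Measurable (Function.uncurry ℓ')) (hf1 : ∀ ω, f 1 ω = 0)
    (hfrec : ∀ t, 1 ≤ t → ∀ ω, f (t + 1) ω = sgdStep ℓ' k (η t) (zs t ω) (f t ω)) :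
    ∀ t, 1 ≤ t → Measurable[pastMeasurableSpace zs t] (f t) := by
  refine Nat.le_induction (by rw [funext hf1]; exact measurable_const) fun t ht hft => ?_
  rw [funext (hfrec t ht)]
  exact (measurable_sgdStep hkm hℓ'm (η t)).comp
    ((hft.mono (pastMeasurableSpace_mono t.le_succ) le_rfl).prodMk
      (measurable_pastMeasurableSpace_succ t))

end OnlineGradientDescent

section ExpectedStep

variable {Ω Z H : Type*} [MeasurableSpace Ω] [MeasurableSpace Z] [NormedAddCommGroup H]
  [InnerProductSpace ℝ H] [MeasurableSpace H] [BorelSpace H]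
  {ρ : Measure Z} [IsProbabilityMeasure ρ] {P : Measure Ω} [IsProbabilityMeasure P]
  {ℓ ℓ' : Z → ℝ → ℝ} {k : Z → H} {κ C B : ℝ} {L : ℝ≥0} {V : Ω → H} {W : Ω → Z}
  {zs : ℕ → Ω → Z} {η : ℕ → ℝ} {f : ℕ → Ω → H}

theorem integrable_risk_comp [CompleteSpace H] (hℓ : IsSmoothConvexLoss ℓ ℓ' L)
    (hk : ∀ z, ‖k z‖ ≤ κ) (hint : ∀ g, Integrable (fun z => ℓ z ⟪g, k z⟫) ρ)
    (hgint : ∀ g, Integrable (fun z => ℓ' z ⟪g, k z⟫ • k z) ρ)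
    (hV : Measurable V) (hVB : ∀ ω, ‖V ω‖ ≤ B) :
    Integrable (fun ω => risk ρ ℓ k (V ω)) P := by
  refine .of_bound ((continuous_risk hℓ hk hint hgint).measurable.comp hV).aestronglyMeasurable
    (|risk ρ ℓ k 0| + ‖riskGrad ρ ℓ' k 0‖ * B + L * κ ^ 2 * B ^ 2) (.of_forall fun ω => ?_)
  have hquad := abs_risk_sub_sub_inner_riskGrad_le hℓ hk hint hgint 0 (V ω)
  rw [sub_zero] at hquad
  rw [Real.norm_eq_abs]
  calc |risk ρ ℓ k (V ω)| = |risk ρ ℓ k 0 + ⟪riskGrad ρ ℓ' k 0, V ω⟫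
        + (risk ρ ℓ k (V ω) - risk ρ ℓ k 0 - ⟪riskGrad ρ ℓ' k 0, V ω⟫)| := by ring_nf
    _ ≤ |risk ρ ℓ k 0| + |⟪riskGrad ρ ℓ' k 0, V ω⟫|
        + |risk ρ ℓ k (V ω) - risk ρ ℓ k 0 - ⟪riskGrad ρ ℓ' k 0, V ω⟫| := abs_add_three _ _ _
    _ ≤ |risk ρ ℓ k 0| + ‖riskGrad ρ ℓ' k 0‖ * B + L * κ ^ 2 * B ^ 2 := by
        gcongr
        · exact (abs_real_inner_le_norm _ _).trans (by gcongr; exact hVB ω)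
        · exact hquad.trans (by gcongr; exact hVB ω)

theorem integrable_deriv_mul_inner_riskGrad [SecondCountableTopology H]
    (hlip : ∀ z, LipschitzWith L (ℓ' z)) (hgrowth : ∀ z s, |ℓ' z s| ≤ C + L * |s|)
    (hk : ∀ z, ‖k z‖ ≤ κ) (hkm : Measurable k) (hℓ'm : Measurable (Function.uncurry ℓ'))
    (hgint : ∀ g, Integrable (fun z => ℓ' z ⟪g, k z⟫ • k z) ρ)
    (hV : Measurable V) (hVB : ∀ ω, ‖V ω‖ ≤ B) (hW : Measurable W) :
    Integrable (fun ω => ℓ' (W ω) ⟪V ω, k (W ω)⟫ * ⟪riskGrad ρ ℓ' k (V ω), k (W ω)⟫) P := by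
  refine .of_bound ((measurable_deriv_mul_inner_riskGrad hlip hk hkm hℓ'm hgint).comp
    (hV.prodMk hW)).aestronglyMeasurable
    ((C + L * (κ * B)) * (κ * (‖riskGrad ρ ℓ' k 0‖ + L * κ ^ 2 * B))) (.of_forall fun ω => ?_)
  have hderiv := abs_deriv_inner_le hgrowth hk (hVB ω) (W ω)
  rw [Real.norm_eq_abs, abs_mul]
  gcongr
  · exact (abs_nonneg _).trans hderiv
  · have hκ : 0 ≤ κ := (norm_nonneg _).trans (hk (W ω))
    refine (abs_inner_le_mul_of_norm_le hk _ _).trans ?_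
    gcongr
    exact (norm_riskGrad_le hlip hk hgint _).trans (by gcongr; exact hVB ω)

theorem integral_deriv_mul_inner_riskGrad [CompleteSpace H] [SecondCountableTopology H]
    (hlip : ∀ z, LipschitzWith L (ℓ' z)) (hgrowth : ∀ z s, |ℓ' z s| ≤ C + L * |s|)
    (hk : ∀ z, ‖k z‖ ≤ κ) (hkm : Measurable k) (hℓ'm : Measurable (Function.uncurry ℓ'))
    (hgint : ∀ g, Integrable (fun z => ℓ' z ⟪g, k z⟫ • k z) ρ)
    (hV : Measurable V) (hVB : ∀ ω, ‖V ω‖ ≤ B) (hW : Measurable W) (hVW : IndepFun V W P)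
    (hlaw : P.map W = ρ) :
    ∫ ω, ℓ' (W ω) ⟪V ω, k (W ω)⟫ * ⟪riskGrad ρ ℓ' k (V ω), k (W ω)⟫ ∂P
      = ∫ ω, ‖riskGrad ρ ℓ' k (V ω)‖ ^ 2 ∂P := by
  rw [hVW.integral_comp_eq_integral_integral hV hW
    (G := fun v z => ℓ' z ⟪v, k z⟫ * ⟪riskGrad ρ ℓ' k v, k z⟫)
    (measurable_deriv_mul_inner_riskGrad hlip hk hkm hℓ'm hgint).stronglyMeasurable
    (integrable_deriv_mul_inner_riskGrad hlip hgrowth hk hkm hℓ'm hgint hV hVB hW), hlaw]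
  simp_rw [← inner_riskGrad (hgint _), real_inner_self_eq_norm_sq]

theorem one_sub_mul_integral_excess_risk_le [CompleteSpace H] [SecondCountableTopology H]
    (hℓ : IsSmoothConvexLoss ℓ ℓ' L) (hgrowth : ∀ z s, |ℓ' z s| ≤ C + L * |s|)
    (hk : ∀ z, ‖k z‖ ≤ κ) (hkm : Measurable k) (hℓ'm : Measurable (Function.uncurry ℓ'))
    (hint : ∀ g, Integrable (fun z => ℓ z ⟪g, k z⟫) ρ)
    (hgint : ∀ g, Integrable (fun z => ℓ' z ⟪g, k z⟫ • k z) ρ)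
    {m : H} (hm : ∀ g, risk ρ ℓ k m ≤ risk ρ ℓ k g)
    (hV : Measurable V) (hVB : ∀ ω, ‖V ω‖ ≤ B) (hW : Measurable W) (hVW : IndepFun V W P)
    (hlaw : P.map W = ρ) {a : ℝ} (ha : 0 ≤ a) :
    (1 - 4 * L * κ ^ 2 * a) * (∫ ω, risk ρ ℓ k (V ω) ∂P - risk ρ ℓ k m)
      ≤ ∫ ω, risk ρ ℓ k (sgdStep ℓ' k a (W ω) (V ω)) ∂P - risk ρ ℓ k m := by
  have hq := integrable_deriv_mul_inner_riskGrad hℓ.lipschitzWith hgrowth hk hkm hℓ'm hgint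
    hV hVB hW (P := P)
  have hrisk := integrable_risk_comp hℓ hk hint hgint hV hVB (P := P)
  have hrisk' := integrable_risk_comp hℓ hk hint hgint
    ((measurable_sgdStep hkm hℓ'm a).comp (hV.prodMk hW))
    (fun ω => norm_sgdStep_le hgrowth hk (hVB ω) a (W ω)) (P := P)
  have hstep : ∫ ω, risk ρ ℓ k (V ω) ∂P - a * ∫ ω, ‖riskGrad ρ ℓ' k (V ω)‖ ^ 2 ∂P
      ≤ ∫ ω, risk ρ ℓ k (sgdStep ℓ' k a (W ω) (V ω)) ∂P := by
    rw [← integral_deriv_mul_inner_riskGrad hℓ.lipschitzWith hgrowth hk hkm hℓ'm hgint hV hVB hW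
      hVW hlaw, ← integral_const_mul, ← integral_sub hrisk (hq.const_mul a)]
    exact integral_mono (hrisk.sub (hq.const_mul a)) hrisk' fun ω =>
      risk_sub_mul_le_risk_sgdStep hℓ.convexOn hℓ.hasDerivAt hint hgint a (W ω) (V ω)
  have hdom : ∫ ω, ‖riskGrad ρ ℓ' k (V ω)‖ ^ 2 ∂P
      ≤ 4 * L * κ ^ 2 * (∫ ω, risk ρ ℓ k (V ω) ∂P - risk ρ ℓ k m) := by
    have hmean : ∫ ω, (risk ρ ℓ k (V ω) - risk ρ ℓ k m) ∂P
        = ∫ ω, risk ρ ℓ k (V ω) ∂P - risk ρ ℓ k m := by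
      rw [integral_sub hrisk (integrable_const _), integral_const, probReal_univ, one_smul]
    rw [← hmean, ← integral_const_mul]
    refine integral_mono_of_nonneg (.of_forall fun ω => by positivity)
      ((hrisk.sub (integrable_const _)).const_mul _) (.of_forall fun ω => ?_)
    have := norm_sq_le_of_le_add_inner_add_mul_sq (by positivity)
      (risk_le_add_inner_riskGrad_add hℓ hk hint hgint) hm (V ω)
    simpa only [mul_assoc] using this
  nlinarith [mul_le_mul_of_nonneg_left hdom ha]

theorem one_sub_mul_excess_risk_iterate_le [CompleteSpace H] [SecondCountableTopology H]
    (hℓ : IsSmoothConvexLoss ℓ ℓ' L) (hgrowth : ∀ z s, |ℓ' z s| ≤ C + L * |s|)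
    (hk : ∀ z, ‖k z‖ ≤ κ) (hkm : Measurable k) (hℓ'm : Measurable (Function.uncurry ℓ'))
    (hint : ∀ g, Integrable (fun z => ℓ z ⟪g, k z⟫) ρ)
    (hgint : ∀ g, Integrable (fun z => ℓ' z ⟪g, k z⟫ • k z) ρ)
    {m : H} (hm : ∀ g, risk ρ ℓ k m ≤ risk ρ ℓ k g)
    (hzs : ∀ t, Measurable (zs t)) (hlaw : ∀ t, P.map (zs t) = ρ) (hiid : iIndepFun zs P)
    (hη : ∀ t, 0 ≤ η t) (hf1 : ∀ ω, f 1 ω = 0)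
    (hfrec : ∀ t, 1 ≤ t → ∀ ω, f (t + 1) ω = sgdStep ℓ' k (η t) (zs t ω) (f t ω))
    (t : ℕ) (ht : 1 ≤ t) :
    (1 - 4 * L * κ ^ 2 * η t) * (∫ ω, risk ρ ℓ k (f t ω) ∂P - risk ρ ℓ k m)
      ≤ ∫ ω, risk ρ ℓ k (f (t + 1) ω) ∂P - risk ρ ℓ k m := by
  obtain ⟨B, hB⟩ := exists_norm_iterate_le hgrowth hk hf1 hfrec t ht
  have hft := measurable_pastMeasurableSpace_iterate hkm hℓ'm hf1 hfrec t ht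
  simp only [hfrec t ht]
  exact one_sub_mul_integral_excess_risk_le hℓ hgrowth hk hkm hℓ'm hint hgint hm
    (hft.mono (pastMeasurableSpace_le hzs t) le_rfl) hB (hzs t)
    (hiid.indepFun_of_measurable_pastMeasurableSpace hzs hft) (hlaw t) (hη t)

end ExpectedStep

theorem step_sizes_diverge_of_expected_convergence_general
    {X : Type*} [MeasurableSpace X] {Y : Set ℝ}
    {H : Type*} [NormedAddCommGroup H] [InnerProductSpace ℝ H] [CompleteSpace H]
    [MeasurableSpace H] [BorelSpace H] [SecondCountableTopology H]
    (K : X → H) (hKmeas : Measurable K)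
    (κ : ℝ) (hκ : ∀ x : X, ‖K x‖ ≤ κ)
    (L : ℝ) (hL : 0 < L)
    (φ φ' : ℝ → ℝ → ℝ)
    (hφ'meas : Measurable fun p : ℝ × ℝ => φ' p.1 p.2)
    (hφnonneg : ∀ y ∈ Y, ∀ s : ℝ, 0 ≤ φ y s)
    (hφconv : ∀ y ∈ Y, ConvexOn ℝ Set.univ (φ y))
    (hφderiv : ∀ y ∈ Y, ∀ s : ℝ, HasDerivAt (φ y) (φ' y s) s)
    (hφlip : ∀ y ∈ Y, ∀ s t : ℝ, |φ' y s - φ' y t| ≤ L * |s - t|)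
    (ρ : Measure (X × Y)) [IsProbabilityMeasure ρ]
    (E : H → ℝ) (hE : E = fun g : H => ∫ z : X × Y, φ (z.2 : ℝ) ⟪g, K z.1⟫ ∂ρ)
    (hEint : ∀ g : H, Integrable (fun z : X × Y => φ (z.2 : ℝ) ⟪g, K z.1⟫) ρ)
    (hgint : ∀ g : H, Integrable (fun z : X × Y => φ' (z.2 : ℝ) ⟪g, K z.1⟫ • K z.1) ρ)
    (fH : H) (hmin : ∀ g : H, E fH ≤ E g)
    (M0 : ℝ) (hM0 : ∀ z : X × Y, φ (z.2 : ℝ) 0 ≤ M0)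
    {Ω : Type*} [MeasurableSpace Ω] (P : Measure Ω) [IsProbabilityMeasure P]
    (zs : ℕ → Ω → X × Y) (hzmeas : ∀ t, Measurable (zs t))
    (hzdist : ∀ t, Measure.map (zs t) P = ρ)
    (hziid : iIndepFun zs P)
    (η : ℕ → ℝ) (hηpos : ∀ t, 0 < η t)
    (f : ℕ → Ω → H) (hf1 : ∀ ω : Ω, f 1 ω = 0)
    (hfrec : ∀ t, 1 ≤ t → ∀ ω : Ω,
      f (t + 1) ω = f t ω - (η t * φ' (((zs t ω).2 : Y) : ℝ) ⟪f t ω, K (zs t ω).1⟫) • K (zs t ω).1)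
    (hηbound : ∀ t, 1 ≤ t → η t ≤ 1 / (6 * L * κ ^ 2))
    (hne : ∀ ω : Ω, E (f 1 ω) ≠ E fH)
    (hconv : Tendsto (fun t => ∫ ω, E (f t ω) ∂P) atTop (nhds (E fH))) :
    Tendsto (fun T => ∑ t ∈ Finset.Icc 1 T, η t) atTop atTop := by
  obtain rfl : E = risk ρ (fun z : X × Y => φ z.2) (fun z => K z.1) := hE
  have hℓ : IsSmoothConvexLoss (fun z : X × Y => φ z.2) (fun z => φ' z.2) L.toNNReal :=
    ⟨fun z => hφconv _ z.2.2, fun z => hφderiv _ z.2.2, fun z => .of_dist_le' fun s t => by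
      simpa only [Real.dist_eq] using hφlip _ z.2.2 s t⟩
  have hLL : (L.toNNReal : ℝ) = L := Real.coe_toNNReal _ hL.le
  have hgrowth := hℓ.abs_deriv_le (Real.toNNReal_pos.2 hL) (fun z => hφnonneg _ z.2.2) hM0
  have hstep := one_sub_mul_excess_risk_iterate_le hℓ hgrowth (fun z => hκ z.1)
    (hKmeas.comp measurable_fst) (hφ'meas.comp
      ((measurable_subtype_coe.comp (measurable_snd.comp measurable_fst)).prodMk measurable_snd))
    hEint hgint hmin hzmeas hzdist hziid (fun t => (hηpos t).le) hf1 hfrec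
  rw [hLL] at hstep
  have hcontract : ∀ t, 4 * L * κ ^ 2 * η (t + 1) < 1 := fun t => by
    rcases eq_or_ne κ 0 with rfl | hκ0
    · norm_num
    · have hη := hηbound (t + 1) (by omega)
      rw [le_div_iff₀ (mul_pos (by positivity) (pow_two_pos_of_ne_zero hκ0))] at hη
      linarith
  have hnot := not_summable_of_one_sub_mul_le
    (fun t => mul_nonneg (by positivity) (hηpos _).le) hcontract
    (fun t => hstep (t + 1) (by omega)) ?_ ?_
  · refine ((not_summable_iff_tendsto_nat_atTop_of_nonneg fun t => (hηpos (t + 1)).le).1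
      fun hs => hnot (hs.mul_left _)).congr fun T => ?_
    rw [Finset.range_eq_Ico, Finset.sum_Ico_add' η, Finset.Ico_add_one_right_eq_Icc]
  · obtain ⟨ω⟩ := nonempty_of_isProbabilityMeasure P
    simp only [hf1, integral_const, probReal_univ, one_smul]
    exact sub_pos.2 ((hmin 0).lt_of_ne (hf1 ω ▸ hne ω).symm)
  · simpa using (hconv.comp (tendsto_add_atTop_nat 1)).sub_const
      (risk ρ (fun z : X × Y => φ z.2) (fun z => K z.1) fH)

/-- Theorem 2 (necessary condition for convergence in expectation): for a convex loss with
`(1, L)`-Hölder continuous derivative and step sizes `η_t ≤ 1/(6Lκ²)`, if the expected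
generalization errors of online gradient descent converge to `E(f_H)` and `E(f_1) ≠ E(f_H)`,
then `∑ η_t = ∞`. -/
theorem step_sizes_diverge_of_expected_convergence
    {X : Type*} [MeasurableSpace X] {Y : Set ℝ}
    {H : Type*} [NormedAddCommGroup H] [InnerProductSpace ℝ H] [CompleteSpace H]
    [MeasurableSpace H] [BorelSpace H] [SecondCountableTopology H]
    (K : X → H) (hKmeas : Measurable K)
    (κ : ℝ) (hκ : ∀ x : X, ‖K x‖ ≤ κ)
    (L : ℝ) (hL : 0 < L)
    (φ φ' : ℝ → ℝ → ℝ)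
    (hφmeas : Measurable fun p : ℝ × ℝ => φ p.1 p.2)
    (hφ'meas : Measurable fun p : ℝ × ℝ => φ' p.1 p.2)
    (hφnonneg : ∀ y ∈ Y, ∀ s : ℝ, 0 ≤ φ y s)
    (hφconv : ∀ y ∈ Y, ConvexOn ℝ Set.univ (φ y))
    (hφderiv : ∀ y ∈ Y, ∀ s : ℝ, HasDerivAt (φ y) (φ' y s) s)
    (hφlip : ∀ y ∈ Y, ∀ s t : ℝ, |φ' y s - φ' y t| ≤ L * |s - t|)
    (ρ : Measure (X × Y)) [IsProbabilityMeasure ρ]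
    (E : H → ℝ) (hE : E = fun g : H => ∫ z : X × Y, φ (z.2 : ℝ) ⟪g, K z.1⟫ ∂ρ)
    (hEint : ∀ g : H, Integrable (fun z : X × Y => φ (z.2 : ℝ) ⟪g, K z.1⟫) ρ)
    (hgint : ∀ g : H, Integrable (fun z : X × Y => φ' (z.2 : ℝ) ⟪g, K z.1⟫ • K z.1) ρ)
    (fH : H) (hmin : ∀ g : H, E fH ≤ E g)
    (hgradH : (∫ z : X × Y, φ' (z.2 : ℝ) ⟪fH, K z.1⟫ • K z.1 ∂ρ) = 0)
    (M0 MH : ℝ) (hM0 : ∀ z : X × Y, φ (z.2 : ℝ) 0 ≤ M0)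
    (hMH : ∀ z : X × Y, φ (z.2 : ℝ) ⟪fH, K z.1⟫ ≤ MH)
    {Ω : Type*} [MeasurableSpace Ω] (P : Measure Ω) [IsProbabilityMeasure P]
    (zs : ℕ → Ω → X × Y) (hzmeas : ∀ t, Measurable (zs t))
    (hzdist : ∀ t, Measure.map (zs t) P = ρ)
    (hziid : iIndepFun zs P)
    (η : ℕ → ℝ) (hηpos : ∀ t, 0 < η t)
    (f : ℕ → Ω → H) (hf1 : ∀ ω : Ω, f 1 ω = 0)
    (hfrec : ∀ t, 1 ≤ t → ∀ ω : Ω,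
      f (t + 1) ω = f t ω - (η t * φ' (((zs t ω).2 : Y) : ℝ) ⟪f t ω, K (zs t ω).1⟫) • K (zs t ω).1)
    (hηbound : ∀ t, 1 ≤ t → η t ≤ 1 / (6 * L * κ ^ 2))
    (hne : ∀ ω : Ω, E (f 1 ω) ≠ E fH)
    (hconv : Tendsto (fun t => ∫ ω, E (f t ω) ∂P) atTop (nhds (E fH))) :
    Tendsto (fun T => ∑ t ∈ Finset.Icc 1 T, η t) atTop atTop :=
  step_sizes_diverge_of_expected_convergence_general K hKmeas κ hκ L hL φ φ' hφ'meas hφnonneg hφconv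
    hφderiv hφlip ρ E hE hEint hgint fH hmin M0 hM0 P zs hzmeas hzdist hziid η hηpos f hf1 hfrec
    hηbound hne hconv
end

section
/- Let {f_t}_{t∈ℕ} be the online gradient descent iterates and suppose Assumption 1 holds. Assume η_t ≤ 1/(Aκ²) for all t ∈ ℕ, where A = 2 α^{(1−α)/(1+α)} L^{2/(1+α)} (1+α) and B = α^{−2α/(1+α)} L^{2/(1+α)} (1−α²). Then, for every sample path and every t ∈ ℕ: ‖f_{t+1} − f_H‖² ≤ C₁ ∑_{k=0}^t η_k and ‖f_{t+1}‖² ≤ C₁ ∑_{k=1}^t η_k, where η₀ := 1 and C₁ = ‖f_H‖² + B/A + 2 max{sup_{y∈Y} φ(y,0), sup_{(x,y)∈Z} φ(y, f_H(x))}. If in addition η_{t+1} ≤ η_t for all t, then ∑_{k=1}^t η_k² φ(y_k, f_k(x_k)) ≤ η₁‖f_H‖² + C₂ ∑_{k=1}^t η_k², where C₂ = 2 sup_{(x,y)∈Z} φ(y, f_H(x)) + η₁ κ² B. -/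
open MeasureTheory ProbabilityTheory Filter Real
open scoped RealInnerProductSpace

/-!
Testing the tangent inequality of the convex loss `φ(y, ·)` at `s - u` and using the Hölder
bound on `φ'` gives `φ'(y,s) u ≤ φ(y,s) + L |u|^{1+α}` for every `u`; choosing the optimal `u`
and applying weighted AM-GM yields the self-bounding estimate `φ'(y,s)² ≤ A φ(y,s) + B`.
Expanding the square in one gradient step, convexity and this estimate (with `η_t A κ² ≤ 1`
absorbing half of the loss term) give, for every `w ∈ H`,
`‖f_{t+1} - w‖² ≤ ‖f_t - w‖² - η_t φ(y_t, f_t(x_t)) + 2 η_t φ(y_t, w(x_t)) + η_t² κ² B`.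
Telescoping this with `w = f_H` and `w = 0` gives the two norm bounds; multiplying it by `η_t`
and summing by parts with nonincreasing step sizes gives the weighted loss bound.
-/

theorem ConvexOn.add_deriv_mul_sub_le {g g' : ℝ → ℝ} (hconv : ConvexOn ℝ Set.univ g)
    (hderiv : ∀ s, HasDerivAt g (g' s) s) (a b : ℝ) : g a + g' a * (b - a) ≤ g b := by
  rcases lt_trichotomy a b with hab | rfl | hba
  · have := hconv.le_slope_of_hasDerivAt (Set.mem_univ a) (Set.mem_univ b) hab (hderiv a)
    rw [slope_def_field, le_div_iff₀ (sub_pos.mpr hab)] at this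
    linarith
  · simp
  · have := hconv.slope_le_of_hasDerivAt (Set.mem_univ b) (Set.mem_univ a) hba (hderiv a)
    rw [slope_def_field, div_le_iff₀ (sub_pos.mpr hba)] at this
    linarith

theorem deriv_mul_le_add_rpow_of_holder {g g' : ℝ → ℝ} {L α : ℝ} (hα : 0 ≤ α)
    (hg : ∀ s, 0 ≤ g s) (hconv : ConvexOn ℝ Set.univ g) (hderiv : ∀ s, HasDerivAt g (g' s) s)
    (hholder : ∀ s t, |g' s - g' t| ≤ L * |s - t| ^ α) (s u : ℝ) :
    g' s * u ≤ g s + L * |u| ^ (1 + α) := by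
  have htan : g' (s - u) * u ≤ g s := by
    have := hconv.add_deriv_mul_sub_le hderiv (s - u) s
    rw [sub_sub_cancel] at this
    linarith [hg (s - u)]
  have hdiff : (g' s - g' (s - u)) * u ≤ L * |u| ^ α * |u| :=
    calc _ ≤ |g' s - g' (s - u)| * |u| := (le_abs_self _).trans (abs_mul _ _).le
      _ ≤ L * |u| ^ α * |u| := by
        gcongr
        simpa using hholder s (s - u)
  rw [add_comm 1 α, rpow_add_one' (abs_nonneg u) (by linarith)]
  linarith

/-- The constants `A` and `B` of the self-bounding estimate `φ'² ≤ A φ + B` for a nonnegative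
convex loss whose derivative is `α`-Hölder with constant `L`. -/
noncomputable def selfBoundingConstA (α L : ℝ) : ℝ :=
  2 * α ^ ((1 - α) / (1 + α)) * L ^ (2 / (1 + α)) * (1 + α)

noncomputable def selfBoundingConstB (α L : ℝ) : ℝ :=
  α ^ (-(2 * α) / (1 + α)) * L ^ (2 / (1 + α)) * (1 - α ^ 2)

theorem selfBoundingConstA_pos {α L : ℝ} (hα : 0 < α) (hL : 0 < L) :
    0 < selfBoundingConstA α L := by
  unfold selfBoundingConstA; positivity

theorem selfBoundingConstB_nonneg {α L : ℝ} (hα0 : 0 ≤ α) (hα1 : α ≤ 1) (hL : 0 ≤ L) :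
    0 ≤ selfBoundingConstB α L := by
  unfold selfBoundingConstB
  have : 0 ≤ 1 - α ^ 2 := by nlinarith
  positivity

theorem sq_mul_rpow_le_selfBoundingConst {α L x : ℝ} (hα0 : 0 < α) (hα1 : α ≤ 1) (hL : 0 < L)
    (hx : 0 ≤ x) :
    (L * (1 + α)) ^ 2 * x ^ (2 * α / (1 + α)) ≤
      selfBoundingConstA α L * (α * L * x) + selfBoundingConstB α L := by
  unfold selfBoundingConstA selfBoundingConstB
  have hq : 0 < 1 + α := by linarith
  set θ := 2 * α / (1 + α) with hθ
  -- chosen so that `A = D θ` and `B = D (1 - θ)`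
  set D := (1 + α) ^ 2 * α ^ (-θ) * L ^ (2 / (1 + α)) with hD
  have hθ1 : 1 - θ = (1 - α) / (1 + α) := by rw [hθ]; field_simp; ring
  have hθ0 : 0 ≤ 1 - θ := by rw [hθ1]; exact div_nonneg (by linarith) hq.le
  have hamgm : (α * L * x) ^ θ ≤ θ * (α * L * x) + (1 - θ) := by
    simpa using geom_mean_le_arith_mean2_weighted (p₂ := 1) (by positivity) hθ0
      (by positivity) zero_le_one (add_sub_cancel θ 1)
  have hL2 : L ^ (2 / (1 + α)) * L ^ θ = L ^ 2 := by
    rw [← rpow_add hL, show 2 / (1 + α) + θ = 2 by rw [hθ]; field_simp, rpow_two]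
  have hlhs : (L * (1 + α)) ^ 2 * x ^ θ = D * (α * L * x) ^ θ := by
    rw [hD, mul_rpow (by positivity) hx, mul_rpow hα0.le hL.le, rpow_neg hα0.le]
    calc _ = (1 + α) ^ 2 * ((α ^ θ)⁻¹ * α ^ θ) * (L ^ (2 / (1 + α)) * L ^ θ) * x ^ θ := by
          rw [inv_mul_cancel₀ (by positivity), hL2]; ring
      _ = _ := by ring
  have hA : 2 * α ^ ((1 - α) / (1 + α)) * L ^ (2 / (1 + α)) * (1 + α) = D * θ := by
    rw [hD, ← hθ1, sub_eq_add_neg, rpow_add hα0, rpow_one, hθ]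
    field_simp
  have hB : α ^ (-(2 * α) / (1 + α)) * L ^ (2 / (1 + α)) * (1 - α ^ 2) = D * (1 - θ) := by
    rw [hD, hθ1, neg_div, ← hθ]
    field_simp
    ring
  rw [hlhs, hA, hB]
  have hDnn : 0 ≤ D := by positivity
  nlinarith [mul_le_mul_of_nonneg_left hamgm hDnn]

theorem sq_le_selfBoundingConst_of_forall_mul_le {α L c G : ℝ} (hα0 : 0 < α) (hα1 : α ≤ 1)
    (hL : 0 < L) (h : ∀ u, c * u ≤ G + L * |u| ^ (1 + α)) :
    c ^ 2 ≤ selfBoundingConstA α L * G + selfBoundingConstB α L := by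
  have habs : ∀ u, |c| * u ≤ G + L * |u| ^ (1 + α) := by
    intro u
    rcases abs_choice c with hc | hc <;> rw [hc]
    · exact h u
    · simpa using h (-u)
  -- the maximiser of `u ↦ |c| u - L u ^ (1 + α)` on `u ≥ 0`
  set r := (|c| / (L * (1 + α))) ^ α⁻¹
  have hr : 0 ≤ r := by positivity
  have hc : |c| = L * (1 + α) * r ^ α := by
    rw [rpow_inv_rpow (by positivity) hα0.ne']
    field_simp
  have hG : α * L * r ^ (1 + α) ≤ G := by
    have := habs r
    rw [abs_of_nonneg hr, hc, add_comm 1 α, rpow_add_one' hr (by linarith)] at this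
    rw [add_comm 1 α, rpow_add_one' hr (by linarith)]
    linarith
  calc c ^ 2 = (L * (1 + α)) ^ 2 * (r ^ (1 + α)) ^ (2 * α / (1 + α)) := by
        rw [← sq_abs, hc, ← rpow_mul hr, mul_div_cancel₀ _ (by linarith), mul_comm 2 α,
          rpow_mul hr, rpow_two]
        ring
    _ ≤ selfBoundingConstA α L * (α * L * r ^ (1 + α)) + selfBoundingConstB α L :=
        sq_mul_rpow_le_selfBoundingConst hα0 hα1 hL (by positivity)
    _ ≤ selfBoundingConstA α L * G + selfBoundingConstB α L := by
        gcongr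
        exact (selfBoundingConstA_pos hα0 hL).le

theorem sq_deriv_le_selfBoundingConst {g g' : ℝ → ℝ} {L α : ℝ} (hα0 : 0 < α) (hα1 : α ≤ 1)
    (hL : 0 < L) (hg : ∀ s, 0 ≤ g s) (hconv : ConvexOn ℝ Set.univ g)
    (hderiv : ∀ s, HasDerivAt g (g' s) s) (hholder : ∀ s t, |g' s - g' t| ≤ L * |s - t| ^ α)
    (s : ℝ) : g' s ^ 2 ≤ selfBoundingConstA α L * g s + selfBoundingConstB α L :=
  sq_le_selfBoundingConst_of_forall_mul_le hα0 hα1 hL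
    (deriv_mul_le_add_rpow_of_holder hα0.le hg hconv hderiv hholder s)

theorem norm_sub_sq_gradient_step_le {H : Type*} [NormedAddCommGroup H] [InnerProductSpace ℝ H]
    {ℓ ℓ' : ℝ → ℝ} {A B κ η : ℝ} (hℓ : ∀ s, 0 ≤ ℓ s) (hconv : ConvexOn ℝ Set.univ ℓ)
    (hderiv : ∀ s, HasDerivAt ℓ (ℓ' s) s) (hself : ∀ s, ℓ' s ^ 2 ≤ A * ℓ s + B)
    {v : H} (hv : ‖v‖ ≤ κ) (hη : 0 ≤ η) (hηA : η * (A * κ ^ 2) ≤ 1) (f w : H) :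
    ‖f - (η * ℓ' ⟪f, v⟫) • v - w‖ ^ 2 ≤
      ‖f - w‖ ^ 2 - η * ℓ ⟪f, v⟫ + 2 * η * ℓ ⟪w, v⟫ + η ^ 2 * (κ ^ 2 * B) := by
  set s := ⟪f, v⟫
  set G := ℓ' s
  have hexpand : ‖f - (η * G) • v - w‖ ^ 2 =
      ‖f - w‖ ^ 2 - 2 * (η * G) * (s - ⟪w, v⟫) + (η * G) ^ 2 * ‖v‖ ^ 2 := by
    rw [sub_right_comm, norm_sub_sq_real, real_inner_smul_right, inner_sub_left, norm_smul,
      norm_eq_abs, mul_pow, sq_abs]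
    ring
  have htan : ℓ s - ℓ ⟪w, v⟫ ≤ G * (s - ⟪w, v⟫) := by
    linarith [hconv.add_deriv_mul_sub_le hderiv s ⟪w, v⟫]
  have hquad : (η * G) ^ 2 * ‖v‖ ^ 2 ≤ η * ℓ s + η ^ 2 * (κ ^ 2 * B) :=
    calc (η * G) ^ 2 * ‖v‖ ^ 2 ≤ (η * G) ^ 2 * κ ^ 2 := by gcongr
      _ ≤ η ^ 2 * (A * ℓ s + B) * κ ^ 2 := by rw [mul_pow]; gcongr; exact hself s
      _ = η * (η * (A * κ ^ 2)) * ℓ s + η ^ 2 * (κ ^ 2 * B) := by ring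
      _ ≤ η * 1 * ℓ s + η ^ 2 * (κ ^ 2 * B) := by gcongr; exact hℓ s
      _ = η * ℓ s + η ^ 2 * (κ ^ 2 * B) := by ring
  rw [hexpand]
  nlinarith [mul_le_mul_of_nonneg_left htan hη]

theorem le_add_sum_Icc_of_succ_le_add {d e : ℕ → ℝ} (h : ∀ k, 1 ≤ k → d (k + 1) ≤ d k + e k)
    (t : ℕ) (ht : 1 ≤ t) : d (t + 1) ≤ d 1 + ∑ k ∈ Finset.Icc 1 t, e k := by
  induction t, ht using Nat.le_induction with
  | base => simpa using h 1 le_rfl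
  | succ n hn ih =>
    rw [Finset.sum_Icc_succ_top (by omega)]
    linarith [h (n + 1) (by omega)]

theorem sum_Icc_mul_sub_succ_le {d η : ℕ → ℝ} (hd : ∀ k, 0 ≤ d k)
    (hanti : ∀ k, 1 ≤ k → η (k + 1) ≤ η k) (t : ℕ) (ht : 1 ≤ t) :
    ∑ k ∈ Finset.Icc 1 t, η k * (d k - d (k + 1)) ≤ η 1 * d 1 - η t * d (t + 1) := by
  induction t, ht using Nat.le_induction with
  | base => simp only [Finset.Icc_self, Finset.sum_singleton]; linarith
  | succ n hn ih =>
    rw [Finset.sum_Icc_succ_top (by omega)]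
    nlinarith [mul_le_mul_of_nonneg_right (hanti n hn) (hd (n + 1))]

section Descent

variable {d a b η : ℕ → ℝ} {c M : ℝ}

theorem le_add_mul_sum_Icc_of_descent {D : ℝ}
    (hdesc : ∀ t, 1 ≤ t → d (t + 1) ≤ d t - η t * a t + 2 * η t * b t + η t ^ 2 * c)
    (ha : ∀ t, 0 ≤ a t) (hb : ∀ t, b t ≤ M) (hη : ∀ t, 0 ≤ η t)
    (hηc : ∀ t, 1 ≤ t → η t * c ≤ D) (t : ℕ) (ht : 1 ≤ t) :
    d (t + 1) ≤ d 1 + (2 * M + D) * ∑ k ∈ Finset.Icc 1 t, η k := by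
  rw [Finset.mul_sum]
  refine le_add_sum_Icc_of_succ_le_add (fun k hk => ?_) t ht
  have := hdesc k hk
  nlinarith [mul_nonneg (hη k) (ha k), mul_le_mul_of_nonneg_left (hb k) (hη k),
    mul_le_mul_of_nonneg_left (hηc k hk) (hη k)]

theorem sum_Icc_sq_mul_le_of_descent
    (hdesc : ∀ t, 1 ≤ t → d (t + 1) ≤ d t - η t * a t + 2 * η t * b t + η t ^ 2 * c)
    (hd : ∀ t, 0 ≤ d t) (hb : ∀ t, b t ≤ M) (hη : ∀ t, 0 ≤ η t) (hc : 0 ≤ c)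
    (hanti : ∀ t, 1 ≤ t → η (t + 1) ≤ η t) (t : ℕ) (ht : 1 ≤ t) :
    ∑ k ∈ Finset.Icc 1 t, η k ^ 2 * a k ≤
      η 1 * d 1 + (2 * M + η 1 * c) * ∑ k ∈ Finset.Icc 1 t, η k ^ 2 := by
  have hstep : ∀ k ∈ Finset.Icc 1 t,
      η k ^ 2 * a k ≤ η k * (d k - d (k + 1)) + (2 * M + η 1 * c) * η k ^ 2 := by
    intro k hk
    have hk1 : 1 ≤ k := (Finset.mem_Icc.mp hk).1
    have hη1 : η k ≤ η 1 := antitoneOn_nat_Ici_of_succ_le hanti (le_refl 1) hk1 hk1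
    have := mul_le_mul_of_nonneg_left (hdesc k hk1) (hη k)
    nlinarith [mul_le_mul_of_nonneg_left (hb k) (sq_nonneg (η k)),
      mul_le_mul_of_nonneg_right hη1 (mul_nonneg (sq_nonneg (η k)) hc)]
  calc ∑ k ∈ Finset.Icc 1 t, η k ^ 2 * a k
      ≤ ∑ k ∈ Finset.Icc 1 t, (η k * (d k - d (k + 1)) + (2 * M + η 1 * c) * η k ^ 2) :=
        Finset.sum_le_sum hstep
    _ ≤ η 1 * d 1 + (2 * M + η 1 * c) * ∑ k ∈ Finset.Icc 1 t, η k ^ 2 := by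
        rw [Finset.sum_add_distrib, ← Finset.mul_sum]
        nlinarith [sum_Icc_mul_sub_succ_le hd hanti t ht, mul_nonneg (hη t) (hd (t + 1))]

end Descent

theorem pathwise_iterate_bounds_general
    {X : Type*} {Y : Set ℝ}
    {H : Type*} [NormedAddCommGroup H] [InnerProductSpace ℝ H]
    (K : X → H)
    (κ : ℝ) (hκ : ∀ x : X, ‖K x‖ ≤ κ)
    (L α : ℝ) (hL : 0 < L) (hα : α ∈ Set.Ioc (0 : ℝ) 1)
    (φ φ' : ℝ → ℝ → ℝ)
    (hφnonneg : ∀ y ∈ Y, ∀ s : ℝ, 0 ≤ φ y s)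
    (hφconv : ∀ y ∈ Y, ConvexOn ℝ Set.univ (φ y))
    (hφderiv : ∀ y ∈ Y, ∀ s : ℝ, HasDerivAt (φ y) (φ' y s) s)
    (hφholder : ∀ y ∈ Y, ∀ s t : ℝ, |φ' y s - φ' y t| ≤ L * |s - t| ^ α)
    (fH : H)
    (M0 MH : ℝ) (hM0 : ∀ z : X × Y, φ (z.2 : ℝ) 0 ≤ M0)
    (hMH : ∀ z : X × Y, φ (z.2 : ℝ) ⟪fH, K z.1⟫ ≤ MH)
    (η : ℕ → ℝ) (hηpos : ∀ t, 0 < η t)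
    (zs : ℕ → X × Y) (f : ℕ → H) (hf1 : f 1 = 0)
    (hfrec : ∀ t, 1 ≤ t →
      f (t + 1) = f t - (η t * φ' (((zs t).2 : Y) : ℝ) ⟪f t, K (zs t).1⟫) • K (zs t).1)
    (A B C₁ C₂ : ℝ)
    (hA : A = 2 * α ^ ((1 - α) / (1 + α)) * L ^ (2 / (1 + α)) * (1 + α))
    (hB : B = α ^ (-(2 * α) / (1 + α)) * L ^ (2 / (1 + α)) * (1 - α ^ 2))
    (hC₁ : C₁ = ‖fH‖ ^ 2 + B / A + 2 * max M0 MH)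
    (hC₂ : C₂ = 2 * MH + η 1 * κ ^ 2 * B)
    (hηA : ∀ t : ℕ, 1 ≤ t → η t ≤ 1 / (A * κ ^ 2)) :
    (∀ t : ℕ, 1 ≤ t →
        ‖f (t + 1) - fH‖ ^ 2 ≤ C₁ * (1 + ∑ k ∈ Finset.Icc 1 t, η k) ∧
          ‖f (t + 1)‖ ^ 2 ≤ C₁ * ∑ k ∈ Finset.Icc 1 t, η k) ∧
      ((∀ t : ℕ, 1 ≤ t → η (t + 1) ≤ η t) → ∀ t : ℕ, 1 ≤ t →
        (∑ k ∈ Finset.Icc 1 t, η k ^ 2 * φ (((zs k).2 : Y) : ℝ) ⟪f k, K (zs k).1⟫)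
          ≤ η 1 * ‖fH‖ ^ 2 + C₂ * ∑ k ∈ Finset.Icc 1 t, η k ^ 2) := by
  obtain ⟨hα0, hα1⟩ := hα
  have hApos : 0 < A := hA ▸ selfBoundingConstA_pos hα0 hL
  have hBnn : 0 ≤ B := hB ▸ selfBoundingConstB_nonneg hα0.le hα1 hL.le
  have hloss : ∀ t, 0 ≤ φ (zs t).2 ⟪f t, K (zs t).1⟫ := fun t => hφnonneg _ (zs t).2.2 _
  have hηκ : ∀ t, 1 ≤ t → η t * (A * κ ^ 2) ≤ 1 := fun t ht =>
    mul_le_of_le_div₀ zero_le_one (by positivity) (by simpa using hηA t ht)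
  have hdesc : ∀ w : H, ∀ t, 1 ≤ t → ‖f (t + 1) - w‖ ^ 2 ≤ ‖f t - w‖ ^ 2
      - η t * φ (zs t).2 ⟪f t, K (zs t).1⟫ + 2 * η t * φ (zs t).2 ⟪w, K (zs t).1⟫
      + η t ^ 2 * (κ ^ 2 * B) := by
    intro w t ht
    have hy := (zs t).2.2
    rw [hfrec t ht]
    exact norm_sub_sq_gradient_step_le (hφnonneg _ hy) (hφconv _ hy) (hφderiv _ hy)
      (hA ▸ hB ▸ sq_deriv_le_selfBoundingConst hα0 hα1 hL (hφnonneg _ hy) (hφconv _ hy)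
        (hφderiv _ hy) (hφholder _ hy)) (hκ _) (hηpos t).le (hηκ t ht) (f t) w
  have hηB : ∀ t, 1 ≤ t → η t * (κ ^ 2 * B) ≤ B / A := fun t ht => by
    rw [le_div_iff₀ hApos]; nlinarith [hηκ t ht]
  have hdist : ∀ w : H, (∀ t, φ (zs t).2 ⟪w, K (zs t).1⟫ ≤ max M0 MH) → ∀ t, 1 ≤ t →
      ‖f (t + 1) - w‖ ^ 2 ≤ ‖f 1 - w‖ ^ 2 + (2 * max M0 MH + B / A) * ∑ k ∈ Finset.Icc 1 t, η k :=
    fun w hw => le_add_mul_sum_Icc_of_descent (d := fun t => ‖f t - w‖ ^ 2)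
      (b := fun t => φ (zs t).2 ⟪w, K (zs t).1⟫) (hdesc w) hloss hw (fun t => (hηpos t).le) hηB
  have hMnn : 0 ≤ max M0 MH :=
    (hφnonneg _ (zs 1).2.2 _).trans ((hMH (zs 1)).trans (le_max_right _ _))
  have hS : ∀ t, 0 ≤ ∑ k ∈ Finset.Icc 1 t, η k := fun t =>
    Finset.sum_nonneg fun k _ => (hηpos k).le
  have hC₁fH : ‖fH‖ ^ 2 ≤ C₁ := by rw [hC₁]; linarith [div_nonneg hBnn hApos.le]
  have hC₁M : 2 * max M0 MH + B / A ≤ C₁ := by rw [hC₁]; linarith [sq_nonneg ‖fH‖]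
  refine ⟨fun t ht => ⟨?_, ?_⟩, fun hanti t ht => ?_⟩
  · have := hdist fH (fun t => (hMH _).trans (le_max_right _ _)) t ht
    rw [hf1, zero_sub, norm_neg] at this
    linarith [mul_le_mul_of_nonneg_right hC₁M (hS t)]
  · have := hdist 0 (fun t => by simpa using (hM0 (zs t)).trans (le_max_left _ _)) t ht
    rw [hf1, sub_zero, sub_zero, norm_zero] at this
    linarith [mul_le_mul_of_nonneg_right hC₁M (hS t)]
  · have := sum_Icc_sq_mul_le_of_descent (d := fun t => ‖f t - fH‖ ^ 2)
      (a := fun t => φ (zs t).2 ⟪f t, K (zs t).1⟫) (hdesc fH) (fun t => sq_nonneg _)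
      (fun t => hMH (zs t)) (fun t => (hηpos t).le) (by positivity) hanti t ht
    rw [hf1, zero_sub, norm_neg] at this
    rw [hC₂]
    linarith

/-- Lemma 5 (pathwise bounds for the iterates): for any sample sequence, with `η_t ≤ 1/(Aκ²)`,
`‖f_{t+1} - f_H‖² ≤ C₁ ∑_{k=0}^t η_k` and `‖f_{t+1}‖² ≤ C₁ ∑_{k=1}^t η_k` (where `η₀ := 1`);
if moreover the step sizes are nonincreasing, then
`∑_{k=1}^t η_k² φ(y_k, f_k(x_k)) ≤ η₁‖f_H‖² + C₂ ∑_{k=1}^t η_k²`. -/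
theorem pathwise_iterate_bounds
    {X : Type*} [MeasurableSpace X] {Y : Set ℝ}
    {H : Type*} [NormedAddCommGroup H] [InnerProductSpace ℝ H] [CompleteSpace H]
    [MeasurableSpace H] [BorelSpace H] [SecondCountableTopology H]
    (K : X → H) (hKmeas : Measurable K)
    (κ : ℝ) (hκ : ∀ x : X, ‖K x‖ ≤ κ)
    (L α : ℝ) (hL : 0 < L) (hα : α ∈ Set.Ioc (0 : ℝ) 1)
    (φ φ' : ℝ → ℝ → ℝ)
    (hφmeas : Measurable fun p : ℝ × ℝ => φ p.1 p.2)
    (hφ'meas : Measurable fun p : ℝ × ℝ => φ' p.1 p.2)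
    (hφnonneg : ∀ y ∈ Y, ∀ s : ℝ, 0 ≤ φ y s)
    (hφconv : ∀ y ∈ Y, ConvexOn ℝ Set.univ (φ y))
    (hφderiv : ∀ y ∈ Y, ∀ s : ℝ, HasDerivAt (φ y) (φ' y s) s)
    (hφholder : ∀ y ∈ Y, ∀ s t : ℝ, |φ' y s - φ' y t| ≤ L * |s - t| ^ α)
    (ρ : Measure (X × Y)) [IsProbabilityMeasure ρ]
    (E : H → ℝ) (hE : E = fun g : H => ∫ z : X × Y, φ (z.2 : ℝ) ⟪g, K z.1⟫ ∂ρ)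
    (hEint : ∀ g : H, Integrable (fun z : X × Y => φ (z.2 : ℝ) ⟪g, K z.1⟫) ρ)
    (hgint : ∀ g : H, Integrable (fun z : X × Y => φ' (z.2 : ℝ) ⟪g, K z.1⟫ • K z.1) ρ)
    (fH : H) (hmin : ∀ g : H, E fH ≤ E g)
    (hgradH : (∫ z : X × Y, φ' (z.2 : ℝ) ⟪fH, K z.1⟫ • K z.1 ∂ρ) = 0)
    (M0 MH : ℝ) (hM0 : ∀ z : X × Y, φ (z.2 : ℝ) 0 ≤ M0)
    (hMH : ∀ z : X × Y, φ (z.2 : ℝ) ⟪fH, K z.1⟫ ≤ MH)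
    (η : ℕ → ℝ) (hηpos : ∀ t, 0 < η t)
    (zs : ℕ → X × Y) (f : ℕ → H) (hf1 : f 1 = 0)
    (hfrec : ∀ t, 1 ≤ t →
      f (t + 1) = f t - (η t * φ' (((zs t).2 : Y) : ℝ) ⟪f t, K (zs t).1⟫) • K (zs t).1)
    (A B C₁ C₂ : ℝ)
    (hA : A = 2 * α ^ ((1 - α) / (1 + α)) * L ^ (2 / (1 + α)) * (1 + α))
    (hB : B = α ^ (-(2 * α) / (1 + α)) * L ^ (2 / (1 + α)) * (1 - α ^ 2))
    (hC₁ : C₁ = ‖fH‖ ^ 2 + B / A + 2 * max M0 MH)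
    (hC₂ : C₂ = 2 * MH + η 1 * κ ^ 2 * B)
    (hηA : ∀ t : ℕ, 1 ≤ t → η t ≤ 1 / (A * κ ^ 2)) :
    (∀ t : ℕ, 1 ≤ t →
        ‖f (t + 1) - fH‖ ^ 2 ≤ C₁ * (1 + ∑ k ∈ Finset.Icc 1 t, η k) ∧
          ‖f (t + 1)‖ ^ 2 ≤ C₁ * ∑ k ∈ Finset.Icc 1 t, η k) ∧
      ((∀ t : ℕ, 1 ≤ t → η (t + 1) ≤ η t) → ∀ t : ℕ, 1 ≤ t →
        (∑ k ∈ Finset.Icc 1 t, η k ^ 2 * φ (((zs k).2 : Y) : ℝ) ⟪f k, K (zs k).1⟫)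
          ≤ η 1 * ‖fH‖ ^ 2 + C₂ * ∑ k ∈ Finset.Icc 1 t, η k ^ 2) :=
  pathwise_iterate_bounds_general K κ hκ L α hL hα φ φ' hφnonneg hφconv hφderiv hφholder fH M0 MH
    hM0 hMH η hηpos zs f hf1 hfrec A B C₁ C₂ hA hB hC₁ hC₂ hηA
end
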